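/- arXiv:2504.12582 — 8 statements merged into one kernel-verified Lean document; each statement's English description precedes it below -/
import Mathlib

section
/- Let n ≥ 1, α ∈ (0,1), and v = (v_1,…,v_{n+1}) ∈ ℝ^{n+1}. Then v_{n+1} > Q_{1−α}( Σ_{i=1}^{n} (1/(n+1))·δ_{v_i} + (1/(n+1))·δ_{+∞} ) if and only if v_{n+1} > Q_{1−α}( Σ_{i=1}^{n+1} (1/(n+1))·δ_{v_i} ). -/
open MeasureTheory Finset
open scoped Classical

/-- The level `(1-α)` quantile of the finitely supported distribution
`∑ i, p i · δ_{a i}` on `ℝ ∪ {+∞}` (encoded via `EReal`):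
`Q_{1-α}(P) = inf { z : ∑_{i : a i ≤ z} p i ≥ 1 - α }`. -/
noncomputable def wQuantile {k : ℕ} (α : ℝ) (p : Fin k → ℝ) (a : Fin k → EReal) : EReal :=
  sInf {z : EReal | 1 - α ≤ ∑ i ∈ Finset.univ.filter (fun i => a i ≤ z), p i}

theorem gt_quantile_with_top_iff (n : ℕ) (hn : 1 ≤ n) (α : ℝ) (hα : 0 < α) (hα1 : α < 1)
    (v : Fin (n + 1) → ℝ) :
    (wQuantile α (fun _ => 1 / ((n : ℝ) + 1))
        (fun i => if i = Fin.last n then (⊤ : EReal) else (v i : EReal)) < (v (Fin.last n) : EReal))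
      ↔ (wQuantile α (fun _ => 1 / ((n : ℝ) + 1)) (fun i => (v i : EReal))
          < (v (Fin.last n) : EReal)) := by
  unfold wQuantile
  rw [sInf_lt_iff, sInf_lt_iff]
  refine exists_congr fun z => and_congr_left fun hlt => ?_
  simp only [Set.mem_setOf_eq]
  have : Finset.univ.filter
        (fun i => (if i = Fin.last n then (⊤ : EReal) else (v i : EReal)) ≤ z)
      = Finset.univ.filter (fun i => (v i : EReal) ≤ z) := by
    apply Finset.filter_congr
    intro i _
    by_cases h : i = Fin.last n
    · subst h
      simp only [if_pos rfl]
      constructor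
      · intro htop
        exact absurd (htop.trans_lt hlt) (not_top_lt)
      · intro hv
        exact absurd (hv.trans_lt hlt) (lt_irrefl _)
    · simp [h]
  rw [this]
end

section
/- Let n ≥ 1, α ∈ (0,1), v = (v_1,…,v_{n+1}) ∈ ℝ^{n+1}, and let 0 ≤ w̃_1 ≤ w̃_2 ≤ ⋯ ≤ w̃_{n+1} be nondecreasing weights with Σ_{i=1}^{n+1} w̃_i = 1. For any K ∈ {1,…,n+1}, letting v^K denote the vector obtained from v by swapping entries K and n+1, one has Q_{1−α}( Σ_{i=1}^{n} w̃_i·δ_{v_i} + w̃_{n+1}·δ_{+∞} ) ≥ Q_{1−α}( Σ_{i=1}^{n+1} w̃_i·δ_{(v^K)_i} ). -/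
open MeasureTheory Finset
open scoped Classical

theorem quantile_top_ge_quantile_swap (n : ℕ) (hn : 1 ≤ n) (α : ℝ) (hα : 0 < α) (hα1 : α < 1)
    (v : Fin (n + 1) → ℝ) (w : Fin (n + 1) → ℝ) (hw0 : ∀ i, 0 ≤ w i)
    (hwmono : Monotone w) (hw1 : ∑ i, w i = 1) (K : Fin (n + 1)) :
    wQuantile α w (fun i => (v (Equiv.swap K (Fin.last n) i) : EReal))
      ≤ wQuantile α w
          (fun i => if i = Fin.last n then (⊤ : EReal) else (v i : EReal)) := by
  apply sInf_le_sInf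
  intro z hz
  simp only [Set.mem_setOf_eq] at hz ⊢
  refine hz.trans ?_
  set σ := Equiv.swap K (Fin.last n) with hσ
  have hsum : ∑ i ∈ Finset.univ.filter (fun i => (v (σ i) : EReal) ≤ z), w i
      = ∑ j ∈ Finset.univ.filter (fun j => (v j : EReal) ≤ z), w (σ j) := by
    refine Finset.sum_equiv σ (fun i => by simp) (fun i _ => ?_)
    rw [hσ, Equiv.swap_apply_self]
  rw [hsum]
  by_cases htop : (⊤ : EReal) ≤ z
  · have hz' : ∀ x : EReal, x ≤ z := fun x => le_trans le_top htop
    rw [Finset.filter_true_of_mem (fun i _ => hz' _),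
        Finset.filter_true_of_mem (fun i _ => hz' _)]
    rw [Equiv.sum_comp σ w]
  · have hlast : ∀ i ∈ Finset.univ.filter
        (fun i => (if i = Fin.last n then (⊤ : EReal) else (v i : EReal)) ≤ z),
        i ≠ Fin.last n := by
      intro i hi hieq
      simp only [Finset.mem_filter, hieq, if_pos] at hi
      exact htop hi.2
    calc ∑ i ∈ Finset.univ.filter
          (fun i => (if i = Fin.last n then (⊤ : EReal) else (v i : EReal)) ≤ z), w i
        ≤ ∑ i ∈ Finset.univ.filter
          (fun i => (if i = Fin.last n then (⊤ : EReal) else (v i : EReal)) ≤ z), w (σ i) := by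
          apply Finset.sum_le_sum
          intro i hi
          rw [hσ]
          rcases eq_or_ne i K with rfl | hiK
          · rw [Equiv.swap_apply_left]
            exact hwmono (Fin.le_last i)
          · rw [Equiv.swap_apply_of_ne_of_ne hiK (hlast i hi)]
      _ ≤ ∑ j ∈ Finset.univ.filter (fun j => (v j : EReal) ≤ z), w (σ j) := by
          apply Finset.sum_le_sum_of_subset_of_nonneg
          · intro i hi
            have hne := hlast i hi
            simp only [Finset.mem_filter, if_neg hne] at hi
            simp [hi.2]
          · intro i _ _
            exact hw0 _
end

section
/- Let n ≥ 1, α ∈ (0,1), and let (V_1,…,V_{n+1}) be an exchangeable random vector with values in ℝ^{n+1}. Then ℙ{ V_{n+1} > Q_{1−α}( Σ_{j=1}^{n+1} (1/(n+1))·δ_{V_j} ) } ≤ α. -/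
open MeasureTheory ProbabilityTheory Finset
open scoped Classical

open scoped ENNReal

lemma wQuantile_mem {k : ℕ} (α : ℝ) (p : Fin k → ℝ) (hp : ∀ i, 0 ≤ p i)
    (a : Fin k → EReal) (htop : 1 - α ≤ ∑ i, p i) :
    1 - α ≤ ∑ i ∈ Finset.univ.filter (fun i => a i ≤ wQuantile α p a), p i := by
  set S : Set EReal := {z | 1 - α ≤ ∑ i ∈ Finset.univ.filter (fun i => a i ≤ z), p i} with hS
  have htopS : (⊤ : EReal) ∈ S := by
    have h : Finset.univ.filter (fun i => a i ≤ (⊤ : EReal)) = Finset.univ := by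
      apply Finset.filter_true_of_mem; intro i _; exact le_top
    simp only [hS, Set.mem_setOf_eq, h]
    exact htop
  have hMne : {m : ℕ | ∃ z ∈ S, (Finset.univ.filter (fun i => a i ≤ z)).card = m}.Nonempty :=
    ⟨_, ⊤, htopS, rfl⟩
  obtain ⟨z₀, hz₀S, hz₀card⟩ := Nat.sInf_mem hMne
  have hmin : ∀ z ∈ S, Finset.univ.filter (fun i => a i ≤ z₀)
      ⊆ Finset.univ.filter (fun i => a i ≤ z) := by
    intro z hz
    rcases le_total z₀ z with h | h
    · exact Finset.monotone_filter_right _ (fun i _ hi => le_trans hi h)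
    · have hsub : Finset.univ.filter (fun i => a i ≤ z)
          ⊆ Finset.univ.filter (fun i => a i ≤ z₀) :=
        Finset.monotone_filter_right _ (fun i _ hi => le_trans hi h)
      have hcard : (Finset.univ.filter (fun i => a i ≤ z₀)).card
          ≤ (Finset.univ.filter (fun i => a i ≤ z)).card := by
        rw [hz₀card]; exact Nat.sInf_le ⟨z, hz, rfl⟩
      rw [Finset.eq_of_subset_of_card_le hsub hcard]
  have hsub : Finset.univ.filter (fun i => a i ≤ z₀)
      ⊆ Finset.univ.filter (fun i => a i ≤ wQuantile α p a) := by
    intro i hi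
    refine Finset.mem_filter.mpr ⟨Finset.mem_univ _, le_sInf fun z hz => ?_⟩
    exact (Finset.mem_filter.mp (hmin z hz hi)).2
  calc 1 - α ≤ ∑ i ∈ Finset.univ.filter (fun i => a i ≤ z₀), p i := hz₀S
    _ ≤ _ := Finset.sum_le_sum_of_subset_of_nonneg hsub (fun i _ _ => hp i)

lemma rank_count_le {k : ℕ} (v : Fin k → ℝ) (c : ℝ) (hc : 0 ≤ c) :
    ((Finset.univ.filter (fun i : Fin k =>
      ((Finset.univ.filter (fun j => v i ≤ v j)).card : ℝ) ≤ c)).card : ℝ) ≤ c := by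
  set I := Finset.univ.filter (fun i : Fin k =>
      ((Finset.univ.filter (fun j => v i ≤ v j)).card : ℝ) ≤ c) with hI
  rcases I.eq_empty_or_nonempty with h | h
  · simp [h, hc]
  · obtain ⟨i₀, hi₀, hmin⟩ := Finset.exists_min_image I v h
    have hIsub : I ⊆ Finset.univ.filter (fun j => v i₀ ≤ v j) := fun i hi =>
      Finset.mem_filter.mpr ⟨Finset.mem_univ _, hmin i hi⟩
    have h1 := Finset.card_le_card hIsub
    have h2 := (Finset.mem_filter.mp hi₀).2
    calc (I.card : ℝ) ≤ _ := Nat.cast_le.mpr h1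
      _ ≤ c := h2

theorem exchangeable_strange_last_le {Ω : Type*} [MeasureSpace Ω]
    [IsProbabilityMeasure (ℙ : Measure Ω)]
    (n : ℕ) (hn : 1 ≤ n) (α : ℝ) (hα : 0 < α) (hα1 : α < 1)
    (V : Ω → Fin (n + 1) → ℝ) (hV : Measurable V)
    (hexch : ∀ σ : Equiv.Perm (Fin (n + 1)),
      Measure.map (fun ω => V ω ∘ σ) ℙ = Measure.map V ℙ) :
    ℙ {ω | wQuantile α (fun _ => 1 / ((n : ℝ) + 1)) (fun j => (V ω j : EReal))
        < (V ω (Fin.last n) : EReal)} ≤ ENNReal.ofReal α := by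
  have hn1 : (0:ℝ) < (n:ℝ) + 1 := by positivity
  set c : ℝ := α * ((n:ℝ) + 1) with hcdef
  have hc0 : 0 ≤ c := by positivity
  set N : (Fin (n+1) → ℝ) → Fin (n+1) → ℕ :=
    fun v i => (Finset.univ.filter (fun j => v i ≤ v j)).card with hN
  have hNmeas : ∀ i, Measurable (fun v : Fin (n+1) → ℝ => N v i) := by
    intro i
    have h : (fun v : Fin (n+1) → ℝ => N v i)
        = fun v => ∑ j : Fin (n+1), if v i ≤ v j then 1 else 0 := by
      funext v; rw [hN]; exact Finset.card_filter _ _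
    rw [h]
    exact Finset.measurable_sum _ (fun j _ =>
      Measurable.ite (measurableSet_le (measurable_pi_apply i) (measurable_pi_apply j))
        measurable_const measurable_const)
  set C : Fin (n+1) → Set (Fin (n+1) → ℝ) := fun i => {v | (N v i : ℝ) ≤ c} with hC
  have hCmeas : ∀ i, MeasurableSet (C i) := by
    intro i
    have : C i = (fun v => N v i) ⁻¹' {m : ℕ | (m : ℝ) ≤ c} := rfl
    rw [this]
    exact (hNmeas i) trivial
  -- step 2 : equal probabilities by exchangeability
  have hBeq : ∀ i, ℙ (V ⁻¹' C i) = ℙ (V ⁻¹' C (Fin.last n)) := by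
    intro i
    set σ : Equiv.Perm (Fin (n+1)) := Equiv.swap i (Fin.last n) with hσ
    have hVσ : Measurable (fun ω => V ω ∘ σ) :=
      measurable_pi_lambda _ (fun j => (measurable_pi_apply (σ j)).comp hV)
    have h3 : (fun ω => V ω ∘ σ) ⁻¹' C i = V ⁻¹' C (Fin.last n) := by
      ext ω
      simp only [hC, Set.mem_preimage, Set.mem_setOf_eq]
      have hcard : N (V ω ∘ σ) i = N (V ω) (Fin.last n) := by
        have hσi : σ i = Fin.last n := Equiv.swap_apply_left _ _
        simp only [hN, Function.comp, hσi]
        exact Finset.card_equiv σ (fun j => by simp)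
      rw [hcard]
    calc ℙ (V ⁻¹' C i) = (Measure.map V ℙ) (C i) :=
          (Measure.map_apply hV (hCmeas i)).symm
      _ = ℙ ((fun ω => V ω ∘ σ) ⁻¹' C i) := by
          rw [← hexch σ, Measure.map_apply hVσ (hCmeas i)]
      _ = ℙ (V ⁻¹' C (Fin.last n)) := by rw [h3]
  -- step 3 : sum bound
  have hsum : ∑ i : Fin (n+1), ℙ (V ⁻¹' C i) ≤ ENNReal.ofReal c := by
    calc ∑ i : Fin (n+1), ℙ (V ⁻¹' C i)
        = ∫⁻ ω, (∑ i : Fin (n+1), (V ⁻¹' C i).indicator (fun _ => (1:ℝ≥0∞)) ω) ∂ℙ := by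
          rw [lintegral_finset_sum _ (fun i _ => measurable_const.indicator (hV (hCmeas i)))]
          refine Finset.sum_congr rfl (fun i _ => ?_)
          exact (lintegral_indicator_one (hV (hCmeas i))).symm
      _ ≤ ∫⁻ ω, ENNReal.ofReal c ∂ℙ := by
          refine lintegral_mono (fun ω => ?_)
          have heq : ∑ i : Fin (n+1), (V ⁻¹' C i).indicator (fun _ => (1:ℝ≥0∞)) ω
              = ((Finset.univ.filter (fun i : Fin (n+1) =>
                  ((Finset.univ.filter (fun j => V ω i ≤ V ω j)).card : ℝ) ≤ c)).card : ℝ≥0∞) := by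
            rw [Finset.card_filter]
            push_cast
            refine Finset.sum_congr rfl (fun i _ => ?_)
            by_cases hmem : ω ∈ V ⁻¹' C i
            · have : ((Finset.univ.filter (fun j => V ω i ≤ V ω j)).card : ℝ) ≤ c := hmem
              simp [Set.indicator_apply, hmem, this]
            · have : ¬ ((Finset.univ.filter (fun j => V ω i ≤ V ω j)).card : ℝ) ≤ c := hmem
              simp [Set.indicator_apply, hmem, this]
          rw [heq]
          have hr := rank_count_le (V ω) c hc0
          calc ((Finset.univ.filter (fun i : Fin (n+1) =>
                  ((Finset.univ.filter (fun j => V ω i ≤ V ω j)).card : ℝ) ≤ c)).card : ℝ≥0∞)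
              = ENNReal.ofReal ((Finset.univ.filter (fun i : Fin (n+1) =>
                  ((Finset.univ.filter (fun j => V ω i ≤ V ω j)).card : ℝ) ≤ c)).card : ℝ) := by
                rw [ENNReal.ofReal_natCast]
            _ ≤ ENNReal.ofReal c := ENNReal.ofReal_le_ofReal hr
      _ = ENNReal.ofReal c := by simp
  -- step 1 : event inclusion
  have hA : {ω | wQuantile α (fun _ => 1 / ((n : ℝ) + 1)) (fun j => (V ω j : EReal))
        < (V ω (Fin.last n) : EReal)} ⊆ V ⁻¹' C (Fin.last n) := by
    intro ω hω
    simp only [Set.mem_setOf_eq] at hω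
    have htot : ∑ _i : Fin (n+1), (1 / ((n:ℝ)+1)) = 1 := by
      rw [Finset.sum_const, Finset.card_univ, Fintype.card_fin, nsmul_eq_mul]
      push_cast
      field_simp
    have hq := wQuantile_mem α (fun _ => 1 / ((n:ℝ)+1)) (fun _ => by positivity)
      (fun j => (V ω j : EReal)) (by rw [htot]; linarith)
    set Q := wQuantile α (fun _ => 1 / ((n : ℝ) + 1)) (fun j => (V ω j : EReal)) with hQ
    set T := Finset.univ.filter (fun j : Fin (n+1) => (V ω j : EReal) ≤ Q) with hT
    set R := Finset.univ.filter (fun j : Fin (n+1) => V ω (Fin.last n) ≤ V ω j) with hR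
    have hTcard : (1 - α) * ((n:ℝ)+1) ≤ (T.card : ℝ) := by
      have h1 : (1 : ℝ) - α ≤ ∑ _j ∈ T, (1 / ((n:ℝ)+1)) := hq
      rw [Finset.sum_const, nsmul_eq_mul, mul_one_div] at h1
      exact (le_div_iff₀ hn1).mp h1
    have hdisj : Disjoint R T := by
      rw [Finset.disjoint_left]
      intro j hjR hjT
      have h1 : (V ω j : EReal) ≤ Q := (Finset.mem_filter.mp hjT).2
      have h2 : V ω (Fin.last n) ≤ V ω j := (Finset.mem_filter.mp hjR).2
      have h3 : (V ω j : EReal) < (V ω (Fin.last n) : EReal) := lt_of_le_of_lt h1 hω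
      have h4 : V ω j < V ω (Fin.last n) := by exact_mod_cast h3
      linarith
    have hcards : R.card + T.card ≤ n + 1 := by
      rw [← Finset.card_union_of_disjoint hdisj]
      calc (R ∪ T).card ≤ (Finset.univ : Finset (Fin (n+1))).card := Finset.card_le_univ _
        _ = n + 1 := by simp
    show ((N (V ω) (Fin.last n) : ℝ)) ≤ c
    have hNR : N (V ω) (Fin.last n) = R.card := rfl
    rw [hNR]
    have hcast : (R.card : ℝ) + (T.card : ℝ) ≤ (n:ℝ) + 1 := by exact_mod_cast hcards
    rw [hcdef]
    linarith [hTcard, hcast]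
  -- assemble
  have hsum2 : ((n:ℝ≥0∞)+1) * ℙ (V ⁻¹' C (Fin.last n)) ≤ ENNReal.ofReal c := by
    calc ((n:ℝ≥0∞)+1) * ℙ (V ⁻¹' C (Fin.last n))
        = ∑ i : Fin (n+1), ℙ (V ⁻¹' C i) := by
          rw [Finset.sum_congr rfl (fun i _ => hBeq i), Finset.sum_const, Finset.card_univ,
            Fintype.card_fin, nsmul_eq_mul]
          push_cast
          ring
      _ ≤ ENNReal.ofReal c := hsum
  have hcENN : ENNReal.ofReal c = ((n:ℝ≥0∞)+1) * ENNReal.ofReal α := by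
    rw [hcdef, ENNReal.ofReal_mul hα.le]
    rw [show ((n:ℝ)+1) = ((n+1:ℕ):ℝ) by push_cast; ring, ENNReal.ofReal_natCast]
    push_cast
    ring
  rw [hcENN] at hsum2
  have hfin : ℙ (V ⁻¹' C (Fin.last n)) ≤ ENNReal.ofReal α := by
    have h0 : ((n:ℝ≥0∞)+1) ≠ 0 := by simp
    have htop : ((n:ℝ≥0∞)+1) ≠ ⊤ := by
      simp [ENNReal.add_eq_top]
    exact (ENNReal.mul_le_mul_iff_right h0 htop).mp hsum2
  exact le_trans (measure_mono hA) hfin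
end

section
/- Let n ≥ 1, α ∈ (0,1), and let (V_1,…,V_{n+1}) be an exchangeable random vector with values in ℝ^{n+1}. Then ℙ{ V_{n+1} ≤ Q_{1−α}( Σ_{i=1}^{n} (1/(n+1))·δ_{V_i} + (1/(n+1))·δ_{+∞} ) } ≥ 1 − α. -/
open MeasureTheory ProbabilityTheory Finset
open scoped Classical

lemma conformal_lemA (n : ℕ) (α : ℝ) (hα1 : α < 1) (v : Fin (n+1) → ℝ) :
    ((v (Fin.last n) : EReal) ≤ wQuantile α (fun _ => 1 / ((n : ℝ) + 1))
        (fun i => if i = Fin.last n then (⊤ : EReal) else (v i : EReal))) ↔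
      ((Finset.univ.filter (fun i => v i < v (Fin.last n))).card : ℝ)
        < (1 - α) * ((n : ℝ) + 1) := by
  set a : Fin (n+1) → EReal := fun i => if i = Fin.last n then (⊤ : EReal) else (v i : EReal)
    with ha
  set t : ℝ := (1 - α) * ((n : ℝ) + 1) with htdef
  have hnpos : (0 : ℝ) < (n : ℝ) + 1 := by positivity
  have ht0 : 0 < t := by
    apply mul_pos (by linarith) hnpos
  have hset : ∀ z : EReal,
      (1 - α ≤ ∑ i ∈ Finset.univ.filter (fun i => a i ≤ z), (1 / ((n : ℝ) + 1))) ↔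
      t ≤ ((Finset.univ.filter (fun i => a i ≤ z)).card : ℝ) := by
    intro z
    rw [Finset.sum_const, nsmul_eq_mul]
    rw [htdef, mul_one_div, ← le_div_iff₀ hnpos]
  have hcount : Finset.univ.filter (fun i => a i < ((v (Fin.last n) : ℝ) : EReal)) =
      Finset.univ.filter (fun i => v i < v (Fin.last n)) := by
    apply Finset.filter_congr
    intro i _
    by_cases hi : i = Fin.last n
    · subst hi
      simp [ha]
    · simp [ha, hi, EReal.coe_lt_coe_iff]
  rw [wQuantile]
  constructor
  · intro h
    by_contra hc
    push_neg at hc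
    -- hc : t ≤ card
    set F := Finset.univ.filter (fun i => a i < ((v (Fin.last n) : ℝ) : EReal)) with hF
    have hcard : t ≤ (F.card : ℝ) := by rw [hcount]; exact hc
    have hne : F.Nonempty := by
      rw [← Finset.card_pos]
      by_contra hz
      push_neg at hz
      interval_cases h : F.card
      · simp [h] at hcard; linarith
    obtain ⟨j, hjF, hmax⟩ := F.exists_max_image a hne
    have hj_lt : a j < ((v (Fin.last n) : ℝ) : EReal) := (Finset.mem_filter.1 hjF).2
    have hmem : a j ∈ {z : EReal | 1 - α ≤ ∑ i ∈ Finset.univ.filter (fun i => a i ≤ z),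
        (1 / ((n : ℝ) + 1))} := by
      rw [Set.mem_setOf_eq, hset]
      have hsub : F ⊆ Finset.univ.filter (fun i => a i ≤ a j) := by
        intro i hi
        simp only [Finset.mem_filter, Finset.mem_univ, true_and]
        exact hmax i hi
      calc t ≤ (F.card : ℝ) := hcard
        _ ≤ _ := by exact_mod_cast Finset.card_le_card hsub
    have := csInf_le (OrderBot.bddBelow _) hmem
    exact absurd (h.trans this) (not_le.2 hj_lt)
  · intro hc
    apply le_sInf
    intro z hz
    rw [Set.mem_setOf_eq, hset] at hz
    by_contra hzc
    push_neg at hzc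
    have hsub : Finset.univ.filter (fun i => a i ≤ z) ⊆
        Finset.univ.filter (fun i => a i < ((v (Fin.last n) : ℝ) : EReal)) := by
      intro i hi
      simp only [Finset.mem_filter, Finset.mem_univ, true_and] at hi ⊢
      exact lt_of_le_of_lt hi hzc
    rw [hcount] at hsub
    have := Finset.card_le_card hsub
    have : ((Finset.univ.filter (fun i => a i ≤ z)).card : ℝ)
        ≤ ((Finset.univ.filter (fun i => v i < v (Fin.last n))).card : ℝ) := by exact_mod_cast this
    linarith

lemma conformal_lemB (n : ℕ) (t : ℝ) (ht : t ≤ (n : ℝ) + 1) (v : Fin (n+1) → ℝ) :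
    t ≤ ((Finset.univ.filter (fun j =>
      ((Finset.univ.filter (fun i => v i < v j)).card : ℝ) < t)).card : ℝ) := by
  by_contra h
  push_neg at h
  set A := Finset.univ.filter (fun j =>
      ((Finset.univ.filter (fun i => v i < v j)).card : ℝ) < t) with hA
  have hne : (Finset.univ \ A).Nonempty := by
    rw [Finset.sdiff_nonempty]
    intro hsub
    have := Finset.card_le_card hsub
    rw [Finset.card_univ, Fintype.card_fin] at this
    have : ((n:ℝ) + 1) ≤ (A.card : ℝ) := by exact_mod_cast this
    linarith
  obtain ⟨j0, hj0, hmin⟩ := Finset.exists_min_image (Finset.univ \ A) v hne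
  have hj0A : j0 ∉ A := (Finset.mem_sdiff.1 hj0).2
  have hj0t : t ≤ ((Finset.univ.filter (fun i => v i < v j0)).card : ℝ) := by
    by_contra hcc
    push_neg at hcc
    exact hj0A (Finset.mem_filter.2 ⟨Finset.mem_univ _, hcc⟩)
  have hsub : Finset.univ.filter (fun i => v i < v j0) ⊆ A := by
    intro i hi
    have hvi : v i < v j0 := (Finset.mem_filter.1 hi).2
    by_contra hiA
    have : i ∈ Finset.univ \ A := Finset.mem_sdiff.2 ⟨Finset.mem_univ _, hiA⟩
    exact absurd hvi (not_lt.2 (hmin i this))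
  have := Finset.card_le_card hsub
  have : ((Finset.univ.filter (fun i => v i < v j0)).card : ℝ) ≤ (A.card : ℝ) := by
    exact_mod_cast this
  linarith


theorem exchangeable_split_conformal_coverage {Ω : Type*} [MeasureSpace Ω]
    [IsProbabilityMeasure (ℙ : Measure Ω)]
    (n : ℕ) (hn : 1 ≤ n) (α : ℝ) (hα : 0 < α) (hα1 : α < 1)
    (V : Ω → Fin (n + 1) → ℝ) (hV : Measurable V)
    (hexch : ∀ σ : Equiv.Perm (Fin (n + 1)),
      Measure.map (fun ω => V ω ∘ σ) ℙ = Measure.map V ℙ) :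
    ENNReal.ofReal (1 - α) ≤
      ℙ {ω | (V ω (Fin.last n) : EReal) ≤
        wQuantile α (fun _ => 1 / ((n : ℝ) + 1))
          (fun i => if i = Fin.last n then (⊤ : EReal) else (V ω i : EReal))} := by
  set t : ℝ := (1 - α) * ((n : ℝ) + 1) with htdef
  have hα0 : (0:ℝ) ≤ 1 - α := by linarith
  set S : Fin (n+1) → Set (Fin (n+1) → ℝ) := fun j =>
    {w | ((Finset.univ.filter (fun i => w i < w j)).card : ℝ) < t} with hSdef
  have hSmeas : ∀ j, MeasurableSet (S j) := by
    intro j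
    have hf : Measurable (fun w : Fin (n+1) → ℝ =>
        ∑ i : Fin (n+1), if w i < w j then (1:ℝ) else 0) :=
      Finset.measurable_sum _ (fun i _ =>
        Measurable.ite (measurableSet_lt (measurable_pi_apply i) (measurable_pi_apply j))
          measurable_const measurable_const)
    have hrw : S j = (fun w : Fin (n+1) → ℝ =>
        ∑ i : Fin (n+1), if w i < w j then (1:ℝ) else 0) ⁻¹' Set.Iio t := by
      ext w
      simp only [hSdef, Set.mem_setOf_eq, Set.mem_preimage, Set.mem_Iio,
        Finset.card_filter]
      push_cast
      rfl
    rw [hrw]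
    exact hf measurableSet_Iio
  have hEeq : {ω | (V ω (Fin.last n) : EReal) ≤
        wQuantile α (fun _ => 1 / ((n : ℝ) + 1))
          (fun i => if i = Fin.last n then (⊤ : EReal) else (V ω i : EReal))}
      = V ⁻¹' S (Fin.last n) := by
    ext ω
    simpa [hSdef] using conformal_lemA n α hα1 (V ω)
  rw [hEeq]
  have hEmeas : ∀ j, MeasurableSet (V ⁻¹' S j) := fun j => hV (hSmeas j)
  -- per-index equality via exchangeability
  have hper : ∀ j : Fin (n+1), ℙ (V ⁻¹' S j) = ℙ (V ⁻¹' S (Fin.last n)) := by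
    intro j
    set σ : Equiv.Perm (Fin (n+1)) := Equiv.swap (Fin.last n) j with hσ
    have hVσ : Measurable (fun ω => V ω ∘ σ) := by
      apply measurable_pi_iff.2
      intro i
      exact (measurable_pi_apply (σ i)).comp hV
    have hsetEq : V ⁻¹' S j = (fun ω => V ω ∘ σ) ⁻¹' S (Fin.last n) := by
      ext ω
      simp only [Set.mem_preimage, hSdef, Set.mem_setOf_eq, Function.comp]
      have hσlast : σ (Fin.last n) = j := Equiv.swap_apply_left _ _
      simp only [hσlast]
      have hcard : (Finset.univ.filter (fun i => V ω (σ i) < V ω j)).card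
          = (Finset.univ.filter (fun i => V ω i < V ω j)).card := by
        rw [Finset.card_filter, Finset.card_filter]
        exact Equiv.sum_comp σ (fun i => if V ω i < V ω j then 1 else 0)
      rw [hcard]
    rw [hsetEq,
      ← Measure.map_apply hVσ (hSmeas (Fin.last n)), hexch σ,
      Measure.map_apply hV (hSmeas (Fin.last n))]
  -- key inequality
  have key : ENNReal.ofReal t ≤ ∑ j : Fin (n+1), ℙ (V ⁻¹' S j) := by
    have hsum : ∑ j : Fin (n+1), ℙ (V ⁻¹' S j)
        = ∫⁻ ω, ∑ j : Fin (n+1), (V ⁻¹' S j).indicator (fun _ => (1:ENNReal)) ω ∂ℙ := by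
      rw [lintegral_finset_sum]
      · exact Finset.sum_congr rfl fun j _ => (lintegral_indicator_one (hEmeas j)).symm
      · exact fun j _ => measurable_const.indicator (hEmeas j)
    rw [hsum]
    have hpt : ∀ ω, ENNReal.ofReal t
        ≤ ∑ j : Fin (n+1), (V ⁻¹' S j).indicator (fun _ => (1:ENNReal)) ω := by
      intro ω
      have hsum2 : ∑ j : Fin (n+1), (V ⁻¹' S j).indicator (fun _ => (1:ENNReal)) ω
          = ((Finset.univ.filter (fun j => V ω ∈ S j)).card : ENNReal) := by
        rw [Finset.card_filter]
        push_cast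
        refine Finset.sum_congr rfl fun j _ => ?_
        by_cases h : V ω ∈ S j <;> simp [h, Set.indicator_apply]
      rw [hsum2]
      have hb := conformal_lemB n t (by rw [htdef]; nlinarith [hα.le, Nat.cast_nonneg (α := ℝ) n]) (V ω)
      have : t ≤ ((Finset.univ.filter (fun j => V ω ∈ S j)).card : ℝ) := by
        simpa [hSdef] using hb
      calc ENNReal.ofReal t
          ≤ ENNReal.ofReal ((Finset.univ.filter (fun j => V ω ∈ S j)).card : ℝ) :=
            ENNReal.ofReal_le_ofReal this
        _ = _ := ENNReal.ofReal_natCast _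
    calc ENNReal.ofReal t = ∫⁻ _, ENNReal.ofReal t ∂ℙ := by simp
      _ ≤ _ := lintegral_mono hpt
  have hsumconst : ∑ j : Fin (n+1), ℙ (V ⁻¹' S j)
      = ((n:ENNReal) + 1) * ℙ (V ⁻¹' S (Fin.last n)) := by
    rw [Finset.sum_congr rfl fun j _ => hper j, Finset.sum_const, Finset.card_univ,
      Fintype.card_fin, nsmul_eq_mul]
    push_cast
    ring
  rw [hsumconst] at key
  have hofr : ENNReal.ofReal t = ((n:ENNReal) + 1) * ENNReal.ofReal (1 - α) := by
    rw [htdef, ENNReal.ofReal_mul hα0]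
    rw [mul_comm]
    congr 1
    rw [ENNReal.ofReal_add (by positivity) zero_le_one]
    simp [ENNReal.ofReal_natCast]
  rw [hofr] at key
  have hc0 : ((n:ENNReal) + 1) ≠ 0 := by simp
  have hct : ((n:ENNReal) + 1) ≠ ⊤ := by
    simp [ENNReal.add_eq_top]
  exact (ENNReal.mul_le_mul_iff_right hc0 hct).1 key
end

section
/- (Lemma 1, coverage bound of nonexchangeable conformal prediction.) Let n ≥ 1, α ∈ (0,1), and let R = (R_1,…,R_{n+1}) be a random vector with values in ℝ^{n+1}. Let w_1 ≤ w_2 ≤ ⋯ ≤ w_{n+1} be nonnegative nondecreasing weights, not all zero, and set w̃_i = w_i / (w_1 + ⋯ + w_{n+1}). For each i ∈ {1,…,n+1}, let R^i denote R with entries i and n+1 swapped. Then ℙ{ R_{n+1} ≤ Q_{1−α}( Σ_{i=1}^{n} w̃_i·δ_{R_i} + w̃_{n+1}·δ_{+∞} ) } ≥ 1 − α − Σ_{i=1}^{n} w̃_i · d_TV( law(R), law(R^i) ). -/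
open MeasureTheory ProbabilityTheory Finset
open scoped Classical

noncomputable def tvDist {X : Type*} [MeasurableSpace X] (μ ν : Measure X) : ℝ :=
  sSup {r : ℝ | ∃ A : Set X, MeasurableSet A ∧ r = |(μ A).toReal - (ν A).toReal|}

noncomputable def Sfun {m : ℕ} (p : Fin m → ℝ) (r : Fin m → ℝ) (i : Fin m) : ℝ :=
  ∑ j, if r i ≤ r j then p j else 0

lemma sfun_measurable {m : ℕ} (p : Fin m → ℝ) (i : Fin m) :
    Measurable (fun r : Fin m → ℝ => Sfun p r i) := by
  apply Finset.measurable_sum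
  intro j _
  exact Measurable.ite (measurableSet_le (measurable_pi_apply i) (measurable_pi_apply j))
    measurable_const measurable_const

lemma strange_sum {m : ℕ} (α : ℝ) (hα : 0 ≤ α) (p : Fin m → ℝ) (hp0 : ∀ i, 0 ≤ p i)
    (r : Fin m → ℝ) : ∑ i, (if Sfun p r i ≤ α then p i else 0) ≤ α := by
  rw [← Finset.sum_filter]
  set K := univ.filter (fun i => Sfun p r i ≤ α) with hK
  rcases K.eq_empty_or_nonempty with h | h
  · simp [h, hα]
  · obtain ⟨b, hbK, hbmin⟩ := K.exists_min_image r h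
    have h1 : K ⊆ univ.filter (fun j => r b ≤ r j) := by
      intro j hj
      exact mem_filter.mpr ⟨mem_univ _, hbmin j hj⟩
    calc ∑ i ∈ K, p i ≤ ∑ i ∈ univ.filter (fun j => r b ≤ r j), p i :=
          Finset.sum_le_sum_of_subset_of_nonneg h1 (fun j _ _ => hp0 j)
      _ = Sfun p r b := by unfold Sfun; exact Finset.sum_filter _ _
      _ ≤ α := (mem_filter.mp hbK).2

lemma swap_sfun {m : ℕ} (p : Fin (m+1) → ℝ) (hpmono : Monotone p) (i : Fin m)
    (r : Fin (m+1) → ℝ) :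
    Sfun p r i.castSucc ≤ Sfun p (r ∘ Equiv.swap i.castSucc (Fin.last m)) (Fin.last m) := by
  set σ := Equiv.swap i.castSucc (Fin.last m) with hσ
  have hσlast : σ (Fin.last m) = i.castSucc := Equiv.swap_apply_right _ _
  have hσic : σ i.castSucc = Fin.last m := Equiv.swap_apply_left _ _
  have hne : i.castSucc ≠ Fin.last m := (Fin.castSucc_lt_last i).ne
  have hRHS : Sfun p (r ∘ σ) (Fin.last m)
      = ∑ j, (if r i.castSucc ≤ r j then p (σ j) else 0) := by
    unfold Sfun
    calc (∑ j, if (r ∘ σ) (Fin.last m) ≤ (r ∘ σ) j then p j else 0)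
        = ∑ j, ((fun j => if r i.castSucc ≤ r j then p (σ j) else 0) (σ j)) := by
          refine Finset.sum_congr rfl (fun j _ => ?_)
          simp only [Function.comp_apply, hσlast]
          simp only [hσ, Equiv.swap_apply_self]
      _ = ∑ j, (if r i.castSucc ≤ r j then p (σ j) else 0) :=
          Equiv.sum_comp σ (fun j => if r i.castSucc ≤ r j then p (σ j) else 0)
  rw [hRHS]
  unfold Sfun
  have hmem1 : Fin.last m ∈ univ.erase i.castSucc := mem_erase.mpr ⟨hne.symm, mem_univ _⟩
  rw [← Finset.add_sum_erase univ _ (mem_univ i.castSucc),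
      ← Finset.add_sum_erase univ _ (mem_univ i.castSucc),
      ← Finset.add_sum_erase _ _ hmem1, ← Finset.add_sum_erase _ _ hmem1]
  have hrest : ∀ j ∈ (univ.erase i.castSucc).erase (Fin.last m),
      (if r i.castSucc ≤ r j then p j else 0) = (if r i.castSucc ≤ r j then p (σ j) else 0) := by
    intro j hj
    have h2 := mem_erase.mp hj
    have h3 := mem_erase.mp h2.2
    rw [hσ, Equiv.swap_apply_of_ne_of_ne h3.1 h2.1]
  rw [Finset.sum_congr rfl hrest]
  have hple : p i.castSucc ≤ p (Fin.last m) := hpmono (Fin.castSucc_lt_last i).le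
  by_cases h : r i.castSucc ≤ r (Fin.last m) <;> simp [h, hσic, hσlast] <;> linarith

lemma quantile_iff {m : ℕ} (α : ℝ) (hα : 0 < α) (hα1 : α < 1)
    (p : Fin (m+1) → ℝ) (hp0 : ∀ i, 0 ≤ p i) (hp1 : ∑ j, p j = 1)
    (r : Fin (m+1) → ℝ) :
    ((r (Fin.last m) : EReal) ≤ wQuantile α p
        (fun i => if i = Fin.last m then (⊤ : EReal) else (r i : EReal)))
      ↔ α < Sfun p r (Fin.last m) := by
  set a : Fin (m+1) → EReal := fun i => if i = Fin.last m then (⊤ : EReal) else (r i : EReal)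
    with ha
  set F := univ.filter (fun j => r j < r (Fin.last m)) with hF
  set T := ∑ j ∈ F, p j with hT
  -- split: Sfun + T = 1
  have hsplit : Sfun p r (Fin.last m) + T = 1 := by
    rw [hT, hF]
    have : univ.filter (fun j => r j < r (Fin.last m))
        = univ.filter (fun j => ¬ (r (Fin.last m) ≤ r j)) := by
      exact Finset.filter_congr (fun j _ => not_le.symm)
    rw [this]
    have := Finset.sum_filter_add_sum_filter_not univ (fun j => r (Fin.last m) ≤ r j) p
    rw [← hp1, ← this]
    congr 1
    unfold Sfun
    exact (Finset.sum_filter _ _).symm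
  -- key claim
  have key : wQuantile α p a < (r (Fin.last m) : EReal) ↔ 1 - α ≤ T := by
    constructor
    · intro h
      rw [wQuantile, sInf_lt_iff] at h
      obtain ⟨z, hz, hzlt⟩ := h
      have hsub : univ.filter (fun j => a j ≤ z) ⊆ F := by
        intro j hj
        have hj2 := (mem_filter.mp hj).2
        by_cases hjl : j = Fin.last m
        · exfalso
          rw [ha] at hj2; simp only [hjl, if_pos] at hj2
          have : z = ⊤ := top_le_iff.mp hj2
          rw [this] at hzlt
          exact (not_top_lt hzlt).elim
        · rw [hF]
          refine mem_filter.mpr ⟨mem_univ _, ?_⟩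
          rw [ha] at hj2; simp only [hjl, if_neg, if_false] at hj2
          have : (r j : EReal) < (r (Fin.last m) : EReal) := lt_of_le_of_lt hj2 hzlt
          exact_mod_cast this
      calc 1 - α ≤ ∑ j ∈ univ.filter (fun j => a j ≤ z), p j := hz
        _ ≤ T := Finset.sum_le_sum_of_subset_of_nonneg hsub (fun j _ _ => hp0 j)
    · intro h
      have hFne : F.Nonempty := by
        rcases F.eq_empty_or_nonempty with he | hne
        · exfalso; rw [hT, he] at h; simp at h; linarith
        · exact hne
      obtain ⟨b, hbF, hbmax⟩ := F.exists_max_image r hFne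
      have hblt : r b < r (Fin.last m) := (mem_filter.mp hbF).2
      have hmem : ((r b : EReal)) ∈ {z : EReal |
          1 - α ≤ ∑ i ∈ Finset.univ.filter (fun i => a i ≤ z), p i} := by
        have hsub : F ⊆ univ.filter (fun j => a j ≤ (r b : EReal)) := by
          intro j hj
          have hjlt : r j < r (Fin.last m) := (mem_filter.mp hj).2
          have hjne : j ≠ Fin.last m := by
            intro hh; rw [hh] at hjlt; exact lt_irrefl _ hjlt
          refine mem_filter.mpr ⟨mem_univ _, ?_⟩
          rw [ha]; simp only [hjne, if_false]
          exact_mod_cast hbmax j hj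
        calc (1:ℝ) - α ≤ T := h
          _ ≤ ∑ j ∈ univ.filter (fun j => a j ≤ (r b : EReal)), p j :=
            Finset.sum_le_sum_of_subset_of_nonneg hsub (fun j _ _ => hp0 j)
      calc wQuantile α p a ≤ (r b : EReal) := sInf_le hmem
        _ < (r (Fin.last m) : EReal) := by exact_mod_cast hblt
  constructor
  · intro h
    by_contra hcon
    push_neg at hcon
    have : 1 - α ≤ T := by linarith
    exact absurd (key.mpr this) (not_lt.mpr h)
  · intro h
    by_contra hcon
    push_neg at hcon
    have := key.mp hcon
    linarith

/-- Lemma 1 (coverage bound of nonexchangeable conformal prediction). -/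
theorem nonexchangeable_conformal_coverage {Ω : Type*} [MeasureSpace Ω]
    [IsProbabilityMeasure (ℙ : Measure Ω)]
    (n : ℕ) (hn : 1 ≤ n) (α : ℝ) (hα : 0 < α) (hα1 : α < 1)
    (R : Ω → Fin (n + 1) → ℝ) (hR : Measurable R)
    (w : Fin (n + 1) → ℝ) (hw0 : ∀ i, 0 ≤ w i) (hwmono : Monotone w)
    (hwne : ∃ i, w i ≠ 0) :
    ENNReal.ofReal (1 - α - ∑ i : Fin n,
        (w i.castSucc / ∑ j, w j) *
          tvDist (Measure.map R ℙ)
            (Measure.map (fun ω => R ω ∘ Equiv.swap i.castSucc (Fin.last n)) ℙ))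
      ≤ ℙ {ω | (R ω (Fin.last n) : EReal) ≤
          wQuantile α (fun i => w i / ∑ j, w j)
            (fun i => if i = Fin.last n then (⊤ : EReal) else (R ω i : EReal))} := by
  have hW : (0:ℝ) < ∑ j, w j := by
    obtain ⟨i, hi⟩ := hwne
    exact Finset.sum_pos' (fun j _ => hw0 j) ⟨i, mem_univ i, (hw0 i).lt_of_ne (Ne.symm hi)⟩
  set W := ∑ j, w j with hWdef
  set p : Fin (n+1) → ℝ := fun i => w i / W with hpdef
  have hp0 : ∀ i, 0 ≤ p i := fun i => div_nonneg (hw0 i) hW.le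
  have hp1 : ∑ j, p j = 1 := by
    rw [hpdef]; rw [← Finset.sum_div]; exact div_self hW.ne'
  have hpmono : Monotone p := fun i j h => by
    exact div_le_div_of_nonneg_right (hwmono h) hW.le
  -- events
  set A : Fin (n+1) → Set (Fin (n+1) → ℝ) := fun i => {r | Sfun p r i ≤ α} with hAdef
  have hAmeas : ∀ i, MeasurableSet (A i) :=
    fun i => measurableSet_le (sfun_measurable p i) measurable_const
  set E : Fin (n+1) → Set Ω := fun i => R ⁻¹' A i with hEdef
  have hEmeas : ∀ i, MeasurableSet (E i) := fun i => hR (hAmeas i)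
  haveI : IsProbabilityMeasure (Measure.map R ℙ) := Measure.isProbabilityMeasure_map hR.aemeasurable
  -- the weighted sum of strange probabilities is at most α
  have hsum : ∑ i, p i * (ℙ (E i)).toReal ≤ α := by
    have hind : ∀ i, Integrable ((E i).indicator (1 : Ω → ℝ)) ℙ :=
      fun i => (integrable_const (1:ℝ)).indicator (hEmeas i)
    calc ∑ i, p i * (ℙ (E i)).toReal
        = ∑ i, ∫ ω, p i * (E i).indicator (1 : Ω → ℝ) ω ∂ℙ := by
          refine Finset.sum_congr rfl fun i _ => ?_
          rw [integral_const_mul, integral_indicator_one (hEmeas i)]; rfl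
      _ = ∫ ω, ∑ i, p i * (E i).indicator (1 : Ω → ℝ) ω ∂ℙ :=
          (integral_finset_sum _ (fun i _ => ((hind i).const_mul _))).symm
      _ ≤ ∫ _ω, α ∂ℙ := by
          apply integral_mono
            (integrable_finset_sum _ fun i _ => (hind i).const_mul _) (integrable_const α)
          intro ω
          have heq : ∑ i, p i * (E i).indicator (1 : Ω → ℝ) ω
              = ∑ i, (if Sfun p (R ω) i ≤ α then p i else 0) := by
            refine Finset.sum_congr rfl fun i _ => ?_
            by_cases h : ω ∈ E i
            · have h' : Sfun p (R ω) i ≤ α := h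
              rw [Set.indicator_of_mem h]; simp [h']
            · have h' : ¬ Sfun p (R ω) i ≤ α := h
              rw [Set.indicator_of_notMem h]; simp [h']
          calc ∑ i, p i * (E i).indicator (1 : Ω → ℝ) ω
              = ∑ i, (if Sfun p (R ω) i ≤ α then p i else 0) := heq
            _ ≤ α := strange_sum α hα.le p hp0 (R ω)
      _ = α := by simp
  -- swap measurability
  have hswapmeas : ∀ i : Fin n,
      Measurable (fun ω => R ω ∘ Equiv.swap i.castSucc (Fin.last n)) := fun i =>
    measurable_pi_lambda _ fun j => (measurable_pi_apply _).comp hR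
  -- TV comparison
  have htv : ∀ i : Fin n, (ℙ (E (Fin.last n))).toReal ≤ (ℙ (E i.castSucc)).toReal
      + tvDist (Measure.map R ℙ)
          (Measure.map (fun ω => R ω ∘ Equiv.swap i.castSucc (Fin.last n)) ℙ) := by
    intro i
    set ν := Measure.map (fun ω => R ω ∘ Equiv.swap i.castSucc (Fin.last n)) ℙ with hν
    haveI : IsProbabilityMeasure ν := Measure.isProbabilityMeasure_map (hswapmeas i).aemeasurable
    have hone : ∀ (μ : Measure (Fin (n+1) → ℝ)) [IsProbabilityMeasure μ] (B : Set (Fin (n+1) → ℝ)),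
        (μ B).toReal ≤ 1 := by
      intro μ _ B
      calc (μ B).toReal ≤ (μ Set.univ).toReal :=
            ENNReal.toReal_mono (measure_ne_top _ _) (measure_mono (Set.subset_univ _))
        _ = 1 := by simp
    have hbdd : BddAbove {r : ℝ | ∃ B : Set (Fin (n+1) → ℝ),
        MeasurableSet B ∧ r = |((Measure.map R ℙ) B).toReal - (ν B).toReal|} := by
      refine ⟨1, ?_⟩
      rintro x ⟨B, hB, rfl⟩
      have h1 := hone (Measure.map R ℙ) B
      have h2 := hone ν B
      have h3 : (0:ℝ) ≤ ((Measure.map R ℙ) B).toReal := ENNReal.toReal_nonneg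
      have h4 : (0:ℝ) ≤ (ν B).toReal := ENNReal.toReal_nonneg
      rw [abs_le]; constructor <;> linarith
    have hel : |((Measure.map R ℙ) (A (Fin.last n))).toReal - (ν (A (Fin.last n))).toReal|
        ∈ {r : ℝ | ∃ B : Set (Fin (n+1) → ℝ),
        MeasurableSet B ∧ r = |((Measure.map R ℙ) B).toReal - (ν B).toReal|} :=
      ⟨A (Fin.last n), hAmeas _, rfl⟩
    have hle := le_csSup hbdd hel
    have hmap1 : (Measure.map R ℙ) (A (Fin.last n)) = ℙ (E (Fin.last n)) :=
      Measure.map_apply hR (hAmeas _)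
    have hmap2 : ν (A (Fin.last n))
        = ℙ ((fun ω => R ω ∘ Equiv.swap i.castSucc (Fin.last n)) ⁻¹' A (Fin.last n)) :=
      Measure.map_apply (hswapmeas i) (hAmeas _)
    have hsub : ((fun ω => R ω ∘ Equiv.swap i.castSucc (Fin.last n)) ⁻¹' A (Fin.last n))
        ⊆ E i.castSucc := by
      intro ω hω
      have hω' : Sfun p (R ω ∘ Equiv.swap i.castSucc (Fin.last n)) (Fin.last n) ≤ α := hω
      exact le_trans (swap_sfun p hpmono i (R ω)) hω'
    have hmono : (ν (A (Fin.last n))).toReal ≤ (ℙ (E i.castSucc)).toReal := by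
      rw [hmap2]
      exact ENNReal.toReal_mono (measure_ne_top _ _) (measure_mono hsub)
    rw [hmap1] at hle
    have habs : (ℙ (E (Fin.last n))).toReal - (ν (A (Fin.last n))).toReal
        ≤ tvDist (Measure.map R ℙ) ν := le_trans (le_abs_self _) hle
    linarith
  -- combine
  set D := ∑ i : Fin n, p i.castSucc * tvDist (Measure.map R ℙ)
      (Measure.map (fun ω => R ω ∘ Equiv.swap i.castSucc (Fin.last n)) ℙ) with hD
  have hmain : (ℙ (E (Fin.last n))).toReal ≤ α + D := by
    set P : Fin (n+1) → ℝ := fun j => (ℙ (E j)).toReal with hP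
    have h2 : ∀ i : Fin n, p i.castSucc * P (Fin.last n)
        ≤ p i.castSucc * P i.castSucc + p i.castSucc * tvDist (Measure.map R ℙ)
          (Measure.map (fun ω => R ω ∘ Equiv.swap i.castSucc (Fin.last n)) ℙ) := by
      intro i
      rw [← mul_add]
      exact mul_le_mul_of_nonneg_left (htv i) (hp0 _)
    calc P (Fin.last n) = ∑ j, p j * P (Fin.last n) := by
          rw [← Finset.sum_mul, hp1, one_mul]
      _ = ∑ i : Fin n, p i.castSucc * P (Fin.last n) + p (Fin.last n) * P (Fin.last n) :=
          Fin.sum_univ_castSucc _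
      _ ≤ (∑ i : Fin n, (p i.castSucc * P i.castSucc + p i.castSucc * tvDist (Measure.map R ℙ)
            (Measure.map (fun ω => R ω ∘ Equiv.swap i.castSucc (Fin.last n)) ℙ)))
            + p (Fin.last n) * P (Fin.last n) :=
          add_le_add_left (Finset.sum_le_sum fun i _ => h2 i) _
      _ = (∑ i : Fin n, p i.castSucc * P i.castSucc + p (Fin.last n) * P (Fin.last n)) + D := by
          rw [Finset.sum_add_distrib, hD]; ring
      _ = ∑ j, p j * P j + D := by rw [← Fin.sum_univ_castSucc (fun j => p j * P j)]
      _ ≤ α + D := add_le_add_left hsum _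
  -- identify the coverage event
  have hGeq : {ω | (R ω (Fin.last n) : EReal) ≤
      wQuantile α p (fun i => if i = Fin.last n then (⊤ : EReal) else (R ω i : EReal))}
      = (E (Fin.last n))ᶜ := by
    ext ω
    simp only [Set.mem_setOf_eq, Set.mem_compl_iff]
    rw [quantile_iff α hα hα1 p hp0 hp1 (R ω)]
    have : ω ∈ E (Fin.last n) ↔ Sfun p (R ω) (Fin.last n) ≤ α := Iff.rfl
    rw [this]
    exact ⟨fun h => not_le.mpr h, fun h => not_le.mp h⟩
  rw [hGeq]
  have h3 : (ℙ ((E (Fin.last n))ᶜ)).toReal = 1 - (ℙ (E (Fin.last n))).toReal := by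
    have h4 := measure_add_measure_compl (μ := (ℙ : Measure Ω)) (hEmeas (Fin.last n))
    rw [measure_univ] at h4
    have h5 : (ℙ (E (Fin.last n))).toReal + (ℙ ((E (Fin.last n))ᶜ)).toReal = 1 := by
      rw [← ENNReal.toReal_add (measure_ne_top _ _) (measure_ne_top _ _), h4]; simp
    linarith
  calc ENNReal.ofReal (1 - α - D)
      ≤ ENNReal.ofReal ((ℙ ((E (Fin.last n))ᶜ)).toReal) := by
        apply ENNReal.ofReal_le_ofReal
        rw [h3]; linarith
    _ = ℙ ((E (Fin.last n))ᶜ) := ENNReal.ofReal_toReal (measure_ne_top _ _)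
end

section
/- Let n ≥ 1, α ∈ (0,1), let R = (R_1,…,R_{n+1}) be a random vector with values in ℝ^{n+1}, and let w̃_1,…,w̃_{n+1} ≥ 0 be weights with Σ_{i=1}^{n+1} w̃_i = 1. Let K be a random index, independent of R, with ℙ{K = i} = w̃_i for each i. Define S(r) = { i ∈ {1,…,n+1} : r_i > Q_{1−α}( Σ_{j=1}^{n+1} w̃_j·δ_{r_j} ) } for r ∈ ℝ^{n+1}, and for each i let R^i denote R with entries i and n+1 swapped. Then ℙ{ K ∈ S(R^K) } ≤ α + Σ_{i=1}^{n} w̃_i · d_TV( law(R), law(R^i) ). -/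
open MeasureTheory ProbabilityTheory Finset
open scoped Classical

lemma wQuantile_lt_iff {k : ℕ} {α : ℝ} (hα1 : α < 1) (w : Fin k → ℝ)
    (hw0 : ∀ i, 0 ≤ w i) (r : Fin k → ℝ) (i : Fin k) :
    wQuantile α w (fun j => (r j : EReal)) < (r i : EReal) ↔
      1 - α ≤ ∑ j ∈ Finset.univ.filter (fun j => r j < r i), w j := by
  constructor
  · intro h
    obtain ⟨z, hz, hzlt⟩ := sInf_lt_iff.mp h
    refine le_trans hz (Finset.sum_le_sum_of_subset_of_nonneg ?_ fun j _ _ => hw0 j)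
    intro j hj
    simp only [Finset.mem_filter, Finset.mem_univ, true_and] at hj ⊢
    exact_mod_cast lt_of_le_of_lt hj hzlt
  · intro h
    have hne : (Finset.univ.filter (fun j => r j < r i)).Nonempty := by
      rw [Finset.nonempty_iff_ne_empty]
      intro he
      rw [he, Finset.sum_empty] at h
      linarith
    obtain ⟨m, hm, hmax⟩ := Finset.exists_max_image _ r hne
    have hmi : r m < r i := (Finset.mem_filter.mp hm).2
    refine lt_of_le_of_lt (sInf_le ?_) (show (r m : EReal) < (r i : EReal) from
      EReal.coe_lt_coe_iff.mpr hmi)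
    refine le_trans h (Finset.sum_le_sum_of_subset_of_nonneg ?_ fun j _ _ => hw0 j)
    intro j hj
    simp only [Finset.mem_filter, Finset.mem_univ, true_and] at hj ⊢
    exact_mod_cast hmax j (Finset.mem_filter.mpr ⟨Finset.mem_univ j, hj⟩)

lemma weight_above_le {k : ℕ} {α : ℝ} (hα : 0 < α) (w : Fin k → ℝ)
    (hw0 : ∀ i, 0 ≤ w i) (hw1 : ∑ i, w i = 1) (r : Fin k → ℝ) :
    ∑ i ∈ Finset.univ.filter
        (fun i => 1 - α ≤ ∑ j ∈ Finset.univ.filter (fun j => r j < r i), w j), w i ≤ α := by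
  set A := Finset.univ.filter
      (fun i => 1 - α ≤ ∑ j ∈ Finset.univ.filter (fun j => r j < r i), w j) with hA
  rcases A.eq_empty_or_nonempty with he | hne
  · rw [he, Finset.sum_empty]; linarith
  · obtain ⟨i0, hi0, hmin⟩ := Finset.exists_min_image A r hne
    set B := Finset.univ.filter (fun j => r j < r i0) with hB
    have hdisj : Disjoint A B := by
      rw [Finset.disjoint_left]
      intro j hjA hjB
      exact absurd (hmin j hjA) (not_le.mpr (Finset.mem_filter.mp hjB).2)
    have h1 : ∑ j ∈ A, w j + ∑ j ∈ B, w j ≤ 1 := by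
      rw [← Finset.sum_union hdisj, ← hw1]
      exact Finset.sum_le_sum_of_subset_of_nonneg (Finset.subset_univ _) fun j _ _ => hw0 j
    have h2 : 1 - α ≤ ∑ j ∈ B, w j := (Finset.mem_filter.mp hi0).2
    linarith

lemma tvDist_nonneg {X : Type*} [MeasurableSpace X] (μ ν : Measure X)
    [IsProbabilityMeasure μ] [IsProbabilityMeasure ν] : 0 ≤ tvDist μ ν := by
  have h0 : |(μ (∅ : Set X)).toReal - (ν ∅).toReal| = 0 := by simp
  refine le_trans (abs_nonneg _) (le_csSup ?_ ⟨∅, MeasurableSet.empty, rfl⟩)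
  refine ⟨2, ?_⟩
  rintro x ⟨B, hB, rfl⟩
  have h1 : (μ B).toReal ≤ 1 := by
    simpa using ENNReal.toReal_mono ENNReal.one_ne_top prob_le_one
  have h2 : (ν B).toReal ≤ 1 := by
    simpa using ENNReal.toReal_mono ENNReal.one_ne_top prob_le_one
  have h3 : 0 ≤ (μ B).toReal := ENNReal.toReal_nonneg
  have h4 : 0 ≤ (ν B).toReal := ENNReal.toReal_nonneg
  rw [abs_sub_le_iff]; constructor <;> linarith

lemma le_tvDist {X : Type*} [MeasurableSpace X] (μ ν : Measure X)
    [IsProbabilityMeasure μ] [IsProbabilityMeasure ν] {A : Set X} (hA : MeasurableSet A) :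
    (ν A).toReal ≤ (μ A).toReal + tvDist μ ν := by
  have hbdd : BddAbove {r : ℝ | ∃ A : Set X, MeasurableSet A ∧
      r = |(μ A).toReal - (ν A).toReal|} := by
    refine ⟨2, ?_⟩
    rintro x ⟨B, hB, rfl⟩
    have h1 : (μ B).toReal ≤ 1 := by
      simpa using ENNReal.toReal_mono ENNReal.one_ne_top prob_le_one
    have h2 : (ν B).toReal ≤ 1 := by
      simpa using ENNReal.toReal_mono ENNReal.one_ne_top prob_le_one
    have h3 : 0 ≤ (μ B).toReal := ENNReal.toReal_nonneg
    have h4 : 0 ≤ (ν B).toReal := ENNReal.toReal_nonneg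
    rw [abs_sub_le_iff]; constructor <;> linarith
  have hmem := le_csSup hbdd (show |(μ A).toReal - (ν A).toReal| ∈ _ from ⟨A, hA, rfl⟩)
  have := neg_abs_le ((μ A).toReal - (ν A).toReal)
  unfold tvDist
  linarith
theorem random_swap_strange_le {Ω : Type*} [MeasureSpace Ω]
    [IsProbabilityMeasure (ℙ : Measure Ω)]
    (n : ℕ) (hn : 1 ≤ n) (α : ℝ) (hα : 0 < α) (hα1 : α < 1)
    (R : Ω → Fin (n + 1) → ℝ) (hR : Measurable R)
    (w : Fin (n + 1) → ℝ) (hw0 : ∀ i, 0 ≤ w i) (hw1 : ∑ i, w i = 1)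
    (K : Ω → Fin (n + 1)) (hK : Measurable K)
    (hKR : IndepFun K R ℙ)
    (hKlaw : ∀ i, ℙ {ω | K ω = i} = ENNReal.ofReal (w i)) :
    ℙ {ω | wQuantile α w
          (fun j => (R ω (Equiv.swap (K ω) (Fin.last n) j) : EReal))
        < (R ω (Equiv.swap (K ω) (Fin.last n) (K ω)) : EReal)}
      ≤ ENNReal.ofReal (α + ∑ i : Fin n,
          w i.castSucc *
            tvDist (Measure.map R ℙ)
              (Measure.map (fun ω => R ω ∘ Equiv.swap i.castSucc (Fin.last n)) ℙ)) := by
  classical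
  set μ : Measure (Fin (n + 1) → ℝ) := Measure.map R ℙ with hμ
  haveI hμprob : IsProbabilityMeasure μ := Measure.isProbabilityMeasure_map hR.aemeasurable
  set C : Fin (n + 1) → Set (Fin (n + 1) → ℝ) :=
    fun i => {r | 1 - α ≤ ∑ j ∈ Finset.univ.filter (fun j => r j < r i), w j} with hCdef
  have hCmeas : ∀ i, MeasurableSet (C i) := by
    intro i
    have hCi : C i = {r | 1 - α ≤ ∑ j : Fin (n + 1), if r j < r i then w j else 0} := by
      ext r; simp [hCdef, Finset.sum_filter]
    rw [hCi]
    apply measurableSet_le measurable_const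
    apply Finset.measurable_sum
    intro j _
    exact Measurable.ite (measurableSet_lt (measurable_pi_apply j) (measurable_pi_apply i))
      measurable_const measurable_const
  have hprecomp : ∀ i : Fin (n + 1),
      Measurable (fun r : Fin (n + 1) → ℝ => r ∘ Equiv.swap i (Fin.last n)) := fun i =>
    measurable_pi_lambda _ (fun j => measurable_pi_apply _)
  have hRsw : ∀ i : Fin (n + 1), Measurable (fun ω => R ω ∘ Equiv.swap i (Fin.last n)) :=
    fun i => (hprecomp i).comp hR
  set ν : Fin (n + 1) → Measure (Fin (n + 1) → ℝ) :=
    fun i => Measure.map (fun ω => R ω ∘ Equiv.swap i (Fin.last n)) ℙ with hν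
  have hνprob : ∀ i, IsProbabilityMeasure (ν i) := fun i =>
    Measure.isProbabilityMeasure_map (hRsw i).aemeasurable
  have hEsub : {ω | wQuantile α w
          (fun j => (R ω (Equiv.swap (K ω) (Fin.last n) j) : EReal))
        < (R ω (Equiv.swap (K ω) (Fin.last n) (K ω)) : EReal)} ⊆
      ⋃ i, (K ⁻¹' {i} ∩ (fun ω => R ω ∘ Equiv.swap i (Fin.last n)) ⁻¹' (C i)) := by
    intro ω hω
    simp only [Set.mem_setOf_eq] at hω
    refine Set.mem_iUnion.mpr ⟨K ω, rfl, ?_⟩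
    exact (wQuantile_lt_iff hα1 w hw0
      (fun j => R ω (Equiv.swap (K ω) (Fin.last n) j)) (K ω)).mp hω
  have hterm : ∀ i, ℙ (K ⁻¹' {i} ∩ (fun ω => R ω ∘ Equiv.swap i (Fin.last n)) ⁻¹' (C i))
      = ENNReal.ofReal (w i) * ν i (C i) := by
    intro i
    have hD : MeasurableSet ((fun r : Fin (n + 1) → ℝ =>
        r ∘ Equiv.swap i (Fin.last n)) ⁻¹' (C i)) := hprecomp i (hCmeas i)
    have h1 := hKR.measure_inter_preimage_eq_mul _ _ (measurableSet_singleton i) hD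
    have h3 : ν i (C i) = ℙ ((fun ω => R ω ∘ Equiv.swap i (Fin.last n)) ⁻¹' (C i)) := by
      rw [hν]; exact Measure.map_apply (hRsw i) (hCmeas i)
    have h4 : ℙ (K ⁻¹' {i}) = ENNReal.ofReal (w i) := hKlaw i
    have h5 : (fun ω => R ω ∘ Equiv.swap i (Fin.last n)) ⁻¹' (C i)
        = R ⁻¹' ((fun r : Fin (n + 1) → ℝ => r ∘ Equiv.swap i (Fin.last n)) ⁻¹' (C i)) := rfl
    rw [h5, h1, h4, h3, h5]
  have hTV : ∀ i : Fin (n + 1), ν i (C i) ≤ μ (C i) + ENNReal.ofReal (tvDist μ (ν i)) := by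
    intro i
    haveI := hνprob i
    have h := le_tvDist μ (ν i) (hCmeas i)
    calc ν i (C i) = ENNReal.ofReal ((ν i (C i)).toReal) :=
          (ENNReal.ofReal_toReal (measure_ne_top _ _)).symm
      _ ≤ ENNReal.ofReal ((μ (C i)).toReal + tvDist μ (ν i)) := ENNReal.ofReal_le_ofReal h
      _ ≤ ENNReal.ofReal ((μ (C i)).toReal) + ENNReal.ofReal (tvDist μ (ν i)) :=
          ENNReal.ofReal_add_le
      _ = μ (C i) + ENNReal.ofReal (tvDist μ (ν i)) := by
          rw [ENNReal.ofReal_toReal (measure_ne_top _ _)]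
  have hlast : ν (Fin.last n) = μ := by
    simp only [hν, hμ]
    congr 1
    funext ω
    rw [Equiv.swap_self]
    simp
  have hαsum : ∑ i, ENNReal.ofReal (w i) * μ (C i) ≤ ENNReal.ofReal α := by
    calc ∑ i, ENNReal.ofReal (w i) * μ (C i)
        = ∫⁻ r, ∑ i, (C i).indicator (fun _ => ENNReal.ofReal (w i)) r ∂μ := by
          rw [lintegral_finset_sum _ (fun i _ => measurable_const.indicator (hCmeas i))]
          exact Finset.sum_congr rfl fun i _ => (lintegral_indicator_const (hCmeas i) _).symm
      _ ≤ ∫⁻ _, ENNReal.ofReal α ∂μ := by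
          apply lintegral_mono
          intro r
          show ∑ i : Fin (n + 1), (C i).indicator (fun _ => ENNReal.ofReal (w i)) r
              ≤ ENNReal.ofReal α
          have h1 : ∑ i, (C i).indicator (fun _ => ENNReal.ofReal (w i)) r
              = ENNReal.ofReal (∑ i ∈ Finset.univ.filter (fun i => r ∈ C i), w i) := by
            rw [ENNReal.ofReal_sum_of_nonneg (fun i _ => hw0 i), Finset.sum_filter]
            refine Finset.sum_congr rfl fun i _ => ?_
            by_cases h : r ∈ C i <;> simp [Set.indicator, h]
          rw [h1]
          apply ENNReal.ofReal_le_ofReal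
          have h2 : Finset.univ.filter (fun i => r ∈ C i) = Finset.univ.filter
              (fun i => 1 - α ≤ ∑ j ∈ Finset.univ.filter (fun j => r j < r i), w j) := by
            apply Finset.filter_congr
            intro i _
            rw [hCdef]
            exact Iff.rfl
          rw [h2]
          exact weight_above_le hα w hw0 hw1 r
      _ = ENNReal.ofReal α := by
          rw [lintegral_const, measure_univ, mul_one]
  have htvnn : ∀ i : Fin n, 0 ≤ tvDist μ (ν i.castSucc) := by
    intro i
    haveI := hνprob i.castSucc
    exact tvDist_nonneg μ (ν i.castSucc)
  calc ℙ {ω | wQuantile α w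
          (fun j => (R ω (Equiv.swap (K ω) (Fin.last n) j) : EReal))
        < (R ω (Equiv.swap (K ω) (Fin.last n) (K ω)) : EReal)}
      ≤ ℙ (⋃ i, (K ⁻¹' {i} ∩ (fun ω => R ω ∘ Equiv.swap i (Fin.last n)) ⁻¹' (C i))) :=
        measure_mono hEsub
    _ ≤ ∑' i, ℙ (K ⁻¹' {i} ∩ (fun ω => R ω ∘ Equiv.swap i (Fin.last n)) ⁻¹' (C i)) :=
        measure_iUnion_le _
    _ = ∑ i, ENNReal.ofReal (w i) * ν i (C i) := by
        rw [tsum_fintype]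
        exact Finset.sum_congr rfl fun i _ => hterm i
    _ = ∑ i : Fin n, ENNReal.ofReal (w i.castSucc) * ν i.castSucc (C i.castSucc)
          + ENNReal.ofReal (w (Fin.last n)) * μ (C (Fin.last n)) := by
        rw [Fin.sum_univ_castSucc, hlast]
    _ ≤ ∑ i : Fin n, (ENNReal.ofReal (w i.castSucc) * μ (C i.castSucc)
          + ENNReal.ofReal (w i.castSucc) * ENNReal.ofReal (tvDist μ (ν i.castSucc)))
          + ENNReal.ofReal (w (Fin.last n)) * μ (C (Fin.last n)) := by
        gcongr with i _
        rw [← mul_add]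
        exact mul_le_mul_right (hTV i.castSucc) _
    _ = (∑ i : Fin (n + 1), ENNReal.ofReal (w i) * μ (C i))
          + ∑ i : Fin n, ENNReal.ofReal (w i.castSucc)
              * ENNReal.ofReal (tvDist μ (ν i.castSucc)) := by
        rw [Finset.sum_add_distrib, Fin.sum_univ_castSucc (f := fun i =>
          ENNReal.ofReal (w i) * μ (C i))]
        ring
    _ ≤ ENNReal.ofReal α
          + ENNReal.ofReal (∑ i : Fin n, w i.castSucc * tvDist μ (ν i.castSucc)) := by
        refine add_le_add hαsum (le_of_eq ?_)
        rw [ENNReal.ofReal_sum_of_nonneg (fun i _ => mul_nonneg (hw0 _) (htvnn i))]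
        exact Finset.sum_congr rfl fun i _ => (ENNReal.ofReal_mul (hw0 _)).symm
    _ = ENNReal.ofReal (α + ∑ i : Fin n, w i.castSucc * tvDist μ (ν i.castSucc)) :=
        (ENNReal.ofReal_add hα.le (Finset.sum_nonneg fun i _ =>
          mul_nonneg (hw0 _) (htvnn i))).symm
end

section
/- (Theorem 2, marginal validity of weighted nonexchangeable conformal prediction.) Let n ≥ 1, α ∈ (0,1), and let (V_1,…,V_{n+1}) be an exchangeable random vector with values in ℝ^{n+1}. Let w_1 ≤ w_2 ≤ ⋯ ≤ w_{n+1} be nonnegative nondecreasing weights, not all zero, and set w̃_i = w_i / (w_1 + ⋯ + w_{n+1}). Then ℙ{ V_{n+1} ≤ Q_{1−α}( Σ_{i=1}^{n} w̃_i·δ_{V_i} + w̃_{n+1}·δ_{+∞} ) } ≥ 1 − α; that is, introducing fixed weights into the quantile incurs no coverage loss when the scores are exchangeable. -/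
open MeasureTheory ProbabilityTheory Finset
open scoped Classical


lemma swap_image_self {α : Type*} [DecidableEq α] {T : Finset α} {a b : α}
    (ha : a ∈ T) (hb : b ∈ T) : T.image (Equiv.swap a b) = T := by
  apply Finset.eq_of_subset_of_card_le
  · intro x hx
    simp only [Finset.mem_image] at hx
    obtain ⟨y, hy, rfl⟩ := hx
    rcases eq_or_ne y a with rfl | h1
    · simpa [Equiv.swap_apply_left] using hb
    rcases eq_or_ne y b with rfl | h2
    · simpa [Equiv.swap_apply_right] using ha
    · rwa [Equiv.swap_apply_of_ne_of_ne h1 h2]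
  · rw [Finset.card_image_of_injective _ (Equiv.swap a b).injective]

lemma det_lemma {n : ℕ} (α : ℝ) (hα : 0 < α)
    (p : Fin (n+1) → ℝ) (hp0 : ∀ i, 0 ≤ p i) (hpsum : ∑ i, p i = 1)
    (hpmono : Monotone p) (v : Fin (n+1) → ℝ) :
    (∑ j, if 1 - α ≤ ∑ i, (if v i < v j then p (Equiv.swap j (Fin.last n) i) else 0)
      then p j else 0) ≤ α := by
  set S : Fin (n+1) → ℝ :=
    fun j => ∑ i, if v i < v j then p (Equiv.swap j (Fin.last n) i) else 0 with hS
  rw [← Finset.sum_filter]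
  set T := Finset.univ.filter (fun j => 1 - α ≤ S j) with hT
  rcases T.eq_empty_or_nonempty with h | h
  · rw [h]; simp; linarith
  obtain ⟨j0, hj0T, hj0min⟩ := T.exists_min_image v h
  set τ := Equiv.swap j0 (Fin.last n) with hτ
  have key : ∑ j ∈ T, p (τ j) ≤ α := by
    have hsub : T ⊆ univ.filter (fun i => ¬ (v i < v j0)) := by
      intro j hj
      simp only [mem_filter, mem_univ, true_and, not_lt]
      exact hj0min j hj
    have h1 : ∑ j ∈ T, p (τ j) ≤ ∑ j ∈ univ.filter (fun i => ¬ (v i < v j0)), p (τ j) :=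
      Finset.sum_le_sum_of_subset_of_nonneg hsub (fun i _ _ => hp0 _)
    have h2 : ∑ j ∈ univ.filter (fun i => v i < v j0), p (τ j)
        + ∑ j ∈ univ.filter (fun i => ¬ (v i < v j0)), p (τ j) = 1 := by
      rw [Finset.sum_filter_add_sum_filter_not]
      rw [Equiv.sum_comp τ p]
      exact hpsum
    have h3 : 1 - α ≤ ∑ j ∈ univ.filter (fun i => v i < v j0), p (τ j) := by
      have h4 := (mem_filter.mp hj0T).2
      rw [hS] at h4
      rwa [Finset.sum_filter]
    linarith
  have himg : ∑ j ∈ T, p (τ j) = ∑ j ∈ T.image τ, p j :=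
    (Finset.sum_image (fun a _ b _ h => τ.injective h)).symm
  by_cases hLT : Fin.last n ∈ T
  · have himT : T.image τ = T := swap_image_self hj0T hLT
    calc ∑ j ∈ T, p j = ∑ j ∈ T.image τ, p j := by rw [himT]
      _ = ∑ j ∈ T, p (τ j) := himg.symm
      _ ≤ α := key
  · have hj0L : j0 ≠ Fin.last n := fun h => hLT (h ▸ hj0T)
    have himg2 : T.image τ = insert (Fin.last n) (T.erase j0) := by
      ext x
      simp only [Finset.mem_image, Finset.mem_insert, Finset.mem_erase]
      constructor
      · rintro ⟨y, hy, rfl⟩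
        rcases eq_or_ne y j0 with rfl | h1
        · left; simp [hτ]
        · right
          have hyL : y ≠ Fin.last n := fun h => hLT (h ▸ hy)
          rw [hτ, Equiv.swap_apply_of_ne_of_ne h1 hyL]
          exact ⟨h1, hy⟩
      · rintro (rfl | ⟨h1, h2⟩)
        · exact ⟨j0, hj0T, by simp [hτ]⟩
        · have hxL : x ≠ Fin.last n := fun h => hLT (h ▸ h2)
          exact ⟨x, h2, by rw [hτ, Equiv.swap_apply_of_ne_of_ne h1 hxL]⟩
    have hLe : Fin.last n ∉ T.erase j0 := fun h => hLT (Finset.mem_of_mem_erase h)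
    have hsum2 : ∑ j ∈ T.image τ, p j = p (Fin.last n) + (∑ j ∈ T, p j - p j0) := by
      rw [himg2, Finset.sum_insert hLe, Finset.sum_erase_eq_sub hj0T]
    have hple : p j0 ≤ p (Fin.last n) := hpmono (Fin.le_last j0)
    calc ∑ j ∈ T, p j ≤ ∑ j ∈ T.image τ, p j := by rw [hsum2]; linarith
      _ = ∑ j ∈ T, p (τ j) := himg.symm
      _ ≤ α := key

/-- Theorem 2 (marginal validity of weighted nonexchangeable conformal prediction):
for exchangeable scores, introducing fixed nondecreasing weights into the quantile
incurs no loss of coverage. -/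
theorem weighted_conformal_marginal_validity {Ω : Type*} [MeasureSpace Ω]
    [IsProbabilityMeasure (ℙ : Measure Ω)]
    (n : ℕ) (hn : 1 ≤ n) (α : ℝ) (hα : 0 < α) (hα1 : α < 1)
    (V : Ω → Fin (n + 1) → ℝ) (hV : Measurable V)
    (hexch : ∀ σ : Equiv.Perm (Fin (n + 1)),
      Measure.map (fun ω => V ω ∘ σ) ℙ = Measure.map V ℙ)
    (w : Fin (n + 1) → ℝ) (hw0 : ∀ i, 0 ≤ w i) (hwmono : Monotone w)
    (hwne : ∃ i, w i ≠ 0) :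
    ENNReal.ofReal (1 - α) ≤
      ℙ {ω | (V ω (Fin.last n) : EReal) ≤
        wQuantile α (fun i => w i / ∑ j, w j)
          (fun i => if i = Fin.last n then (⊤ : EReal) else (V ω i : EReal))} := by
  have hWpos : (0:ℝ) < ∑ j, w j := by
    obtain ⟨i, hi⟩ := hwne
    exact Finset.sum_pos' (fun j _ => hw0 j)
      ⟨i, Finset.mem_univ i, lt_of_le_of_ne (hw0 i) (Ne.symm hi)⟩
  set p : Fin (n+1) → ℝ := fun i => w i / ∑ j, w j with hp
  have hp0 : ∀ i, 0 ≤ p i := fun i => div_nonneg (hw0 i) hWpos.le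
  have hpsum : ∑ i, p i = 1 := by
    rw [hp, ← Finset.sum_div]
    exact div_self hWpos.ne'
  have hpmono : Monotone p := fun i j hij =>
    div_le_div_of_nonneg_right (hwmono hij) hWpos.le
  set S : (Fin (n+1) → ℝ) → Fin (n+1) → ℝ :=
    fun v j => ∑ i, if v i < v j then p (Equiv.swap j (Fin.last n) i) else 0 with hS
  have hdet : ∀ v : Fin (n+1) → ℝ, (∑ j, if 1 - α ≤ S v j then p j else 0) ≤ α :=
    fun v => det_lemma α hα p hp0 hpsum hpmono v
  have hSmeas : ∀ j, Measurable fun v : Fin (n+1) → ℝ => S v j := by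
    intro j
    apply Finset.measurable_sum
    intro i _
    exact Measurable.ite (measurableSet_lt (measurable_pi_apply i) (measurable_pi_apply j))
      measurable_const measurable_const
  set B : Fin (n+1) → Set Ω := fun j => {ω | 1 - α ≤ S (V ω) j} with hB
  have hBmeas : ∀ j, MeasurableSet (B j) :=
    fun j => (measurableSet_le measurable_const (hSmeas j)).preimage hV
  -- all the B j have the same probability
  have hmapj : ∀ j, ℙ (B j) = ℙ (B (Fin.last n)) := by
    intro j
    set τ := Equiv.swap j (Fin.last n) with hτ
    have hcomp : ∀ v : Fin (n+1) → ℝ, S (v ∘ τ) (Fin.last n) = S v j := by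
      intro v
      have h1 : S (v ∘ τ) (Fin.last n)
          = ∑ i, (if v (τ i) < v j then p i else 0) := by
        simp [hS, hτ, Function.comp, Equiv.swap_apply_right, Equiv.swap_self]
      rw [h1, ← Equiv.sum_comp τ (fun i => if v (τ i) < v j then p i else 0)]
      simp [hS, hτ, Equiv.swap_apply_self]
    have hC : MeasurableSet {v : Fin (n+1) → ℝ | 1 - α ≤ S v (Fin.last n)} :=
      measurableSet_le measurable_const (hSmeas (Fin.last n))
    have hτmeas : Measurable (fun ω => V ω ∘ τ) :=
      measurable_pi_lambda _ (fun i => (measurable_pi_apply (τ i)).comp hV)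
    have e1 : ℙ (B j)
        = Measure.map (fun ω => V ω ∘ τ) ℙ {v : Fin (n+1) → ℝ | 1 - α ≤ S v (Fin.last n)} := by
      rw [Measure.map_apply hτmeas hC]
      congr 1
      ext ω
      simp only [Set.mem_preimage, Set.mem_setOf_eq, hcomp, hB]
    have e2 : ℙ (B (Fin.last n))
        = Measure.map V ℙ {v : Fin (n+1) → ℝ | 1 - α ≤ S v (Fin.last n)} := by
      rw [Measure.map_apply hV hC]
      rfl
    rw [e1, hexch τ, ← e2]
  -- integration step
  have hindic : ∀ j, (fun ω => if 1 - α ≤ S (V ω) j then p j else 0)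
      = (B j).indicator (fun _ => p j) := by
    intro j
    ext ω
    by_cases h : ω ∈ B j
    · rw [Set.indicator_of_mem h]; exact if_pos h
    · rw [Set.indicator_of_notMem h]; exact if_neg h
  have hint : ∀ j, Integrable (fun ω => if 1 - α ≤ S (V ω) j then p j else 0) ℙ := by
    intro j
    rw [hindic j]
    exact (integrable_const (p j)).indicator (hBmeas j)
  have hPint : ∀ j, ∫ ω, (if 1 - α ≤ S (V ω) j then p j else 0) ∂ℙ
      = (ℙ (B j)).toReal * p j := by
    intro j
    rw [hindic j, integral_indicator_const (p j) (hBmeas j), smul_eq_mul]; rfl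
  have hsumPB : (ℙ (B (Fin.last n))).toReal ≤ α := by
    have h1 : (ℙ (B (Fin.last n))).toReal = ∑ j, (ℙ (B j)).toReal * p j := by
      simp_rw [fun j => hmapj j]
      rw [← Finset.mul_sum, hpsum, mul_one]
    have h2 : ∑ j, (ℙ (B j)).toReal * p j
        = ∫ ω, (∑ j, if 1 - α ≤ S (V ω) j then p j else 0) ∂ℙ := by
      rw [integral_finset_sum _ (fun j _ => hint j)]
      simp_rw [hPint]
    have h3 : ∫ ω, (∑ j, if 1 - α ≤ S (V ω) j then p j else 0) ∂ℙ
        ≤ ∫ (_ : Ω), α ∂ℙ := by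
      apply integral_mono (integrable_finset_sum _ (fun j _ => hint j)) (integrable_const α)
      intro ω
      exact hdet (V ω)
    have h4 : ∫ (_ : Ω), α ∂ℙ = α := by simp
    rw [h1, h2]
    rw [h4] at h3
    exact h3
  have hPB : ℙ (B (Fin.last n)) ≤ ENNReal.ofReal α := by
    rw [← ENNReal.ofReal_toReal (measure_ne_top ℙ (B (Fin.last n)))]
    exact ENNReal.ofReal_le_ofReal hsumPB
  -- inclusion of the complement in the coverage event
  have hsubset : (B (Fin.last n))ᶜ ⊆ {ω | (V ω (Fin.last n) : EReal) ≤
      wQuantile α p (fun i => if i = Fin.last n then (⊤ : EReal) else (V ω i : EReal))} := by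
    intro ω hω
    by_contra hcon
    simp only [Set.mem_setOf_eq, not_le] at hcon
    rw [wQuantile, sInf_lt_iff] at hcon
    obtain ⟨z, hz, hzlt⟩ := hcon
    simp only [Set.mem_setOf_eq] at hz
    apply hω
    show 1 - α ≤ S (V ω) (Fin.last n)
    have hzne : z ≠ ⊤ := ne_top_of_lt hzlt
    have hsub2 : univ.filter (fun i => (if i = Fin.last n then (⊤:EReal) else (V ω i : EReal)) ≤ z)
        ⊆ univ.filter (fun i => V ω i < V ω (Fin.last n)) := by
      intro i hi
      simp only [mem_filter, mem_univ, true_and] at hi ⊢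
      by_cases hiL : i = Fin.last n
      · rw [if_pos hiL] at hi
        exact absurd (top_le_iff.mp hi) hzne
      · rw [if_neg hiL] at hi
        have : (V ω i : EReal) < (V ω (Fin.last n) : EReal) := lt_of_le_of_lt hi hzlt
        exact_mod_cast this
    have hle : ∑ i ∈ univ.filter
          (fun i => (if i = Fin.last n then (⊤:EReal) else (V ω i : EReal)) ≤ z), p i
        ≤ ∑ i ∈ univ.filter (fun i => V ω i < V ω (Fin.last n)), p i :=
      Finset.sum_le_sum_of_subset_of_nonneg hsub2 (fun i _ _ => hp0 i)
    have hSL : S (V ω) (Fin.last n)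
        = ∑ i ∈ univ.filter (fun i => V ω i < V ω (Fin.last n)), p i := by
      simp [hS, Equiv.swap_self, Finset.sum_filter]
    rw [hSL]
    linarith
  calc ENNReal.ofReal (1 - α) = 1 - ENNReal.ofReal α := by
        rw [ENNReal.ofReal_sub _ hα.le, ENNReal.ofReal_one]
    _ ≤ 1 - ℙ (B (Fin.last n)) := tsub_le_tsub_left hPB 1
    _ = ℙ ((B (Fin.last n))ᶜ) := (prob_compl_eq_one_sub (hBmeas (Fin.last n))).symm
    _ ≤ _ := measure_mono hsubset
end

section
/- Let X be a real random variable with law the Gaussian measure N(μ, σ²) with σ > 0, let τ ∈ ℝ, and set ξ = (τ − μ)/σ. Then the conditional variance of X given the event {X > τ} (i.e., the variance of X under the conditional probability measure ℙ(· | X > τ)) equals σ²·( 1 + ξ·φ(ξ)/(1 − Φ(ξ)) − ( φ(ξ)/(1 − Φ(ξ)) )² ). -/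
open MeasureTheory ProbabilityTheory
open Real Filter Set Asymptotics
open scoped NNReal ENNReal


/-- Probability density function of the standard normal distribution. -/
noncomputable def stdNormalPDF (x : ℝ) : ℝ :=
  Real.exp (-x ^ 2 / 2) / Real.sqrt (2 * Real.pi)

lemma stdNormalPDF_eq_gaussian : stdNormalPDF = gaussianPDFReal 0 1 := by
  ext x
  simp [stdNormalPDF, gaussianPDFReal, div_eq_inv_mul, mul_comm]

lemma stdNormalPDF_nonneg (x : ℝ) : 0 ≤ stdNormalPDF x := by
  unfold stdNormalPDF; positivity

lemma stdNormalPDF_pos (x : ℝ) : 0 < stdNormalPDF x := by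
  unfold stdNormalPDF
  have := Real.pi_pos
  positivity

lemma stdNormalPDF_eq (x : ℝ) :
    stdNormalPDF x = Real.exp (-(2⁻¹ : ℝ) * x ^ 2) * (Real.sqrt (2 * Real.pi))⁻¹ := by
  rw [stdNormalPDF, div_eq_mul_inv]
  congr 2
  ring

lemma measurable_stdNormalPDF : Measurable stdNormalPDF := by
  unfold stdNormalPDF; fun_prop

lemma continuous_stdNormalPDF : Continuous stdNormalPDF := by
  unfold stdNormalPDF; fun_prop

lemma hasDerivAt_negPdf (y : ℝ) :
    HasDerivAt (fun x => -stdNormalPDF x) (y * stdNormalPDF y) y := by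
  have h : HasDerivAt (fun x : ℝ => -x ^ 2 / 2) (-y) y := by
    have := ((hasDerivAt_pow 2 y).neg.div_const 2)
    exact this.congr_deriv (by norm_num; ring)
  have := (h.exp.div_const (Real.sqrt (2 * Real.pi))).neg
  exact this.congr_deriv (by simp [stdNormalPDF]; ring)

lemma integrable_pdf : Integrable stdNormalPDF := by
  rw [stdNormalPDF_eq_gaussian]; exact integrable_gaussianPDFReal 0 1

lemma integrable_pow_mul_pdf (n : ℕ) : Integrable (fun y : ℝ => y ^ n * stdNormalPDF y) := by
  have h := (integrable_rpow_mul_exp_neg_mul_sq (b := (2:ℝ)⁻¹) (by norm_num)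
    (s := (n : ℝ)) (lt_of_lt_of_le neg_one_lt_zero (Nat.cast_nonneg n))).mul_const
    (Real.sqrt (2 * Real.pi))⁻¹
  refine h.congr (Filter.Eventually.of_forall fun y => ?_)
  simp only [Real.rpow_natCast, stdNormalPDF_eq, mul_assoc]

lemma tendsto_pow_mul_pdf (n : ℕ) :
    Tendsto (fun y : ℝ => y ^ n * stdNormalPDF y) atTop (nhds 0) := by
  have he : Tendsto (fun x : ℝ => Real.exp (-(1/2) * x)) atTop (nhds 0) := by
    have := tendsto_exp_neg_atTop_nhds_zero.comp
      (tendsto_id.const_mul_atTop (by norm_num : (0:ℝ) < 1/2))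
    refine this.congr fun x => ?_
    simp [Function.comp, neg_mul]
  have h := (rpow_mul_exp_neg_mul_sq_isLittleO_exp_neg (b := (2:ℝ)⁻¹) (by norm_num)
    (n : ℝ)).isBigO.trans_tendsto he
  have h2 := h.mul_const (Real.sqrt (2 * Real.pi))⁻¹
  rw [zero_mul] at h2
  refine h2.congr fun y => ?_
  simp only [Real.rpow_natCast, stdNormalPDF_eq, mul_assoc]

lemma hasDerivAt_pdf (y : ℝ) :
    HasDerivAt stdNormalPDF (-(y * stdNormalPDF y)) y := by
  have := (hasDerivAt_negPdf y).neg
  simpa [Pi.neg_def] using this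

lemma integrable_id_mul_pdf : Integrable (fun y : ℝ => y * stdNormalPDF y) := by
  have := integrable_pow_mul_pdf 1
  simpa using this

lemma integral_Ioi_mul_pdf (a : ℝ) :
    ∫ y in Set.Ioi a, y * stdNormalPDF y = stdNormalPDF a := by
  have htend : Filter.Tendsto (fun x : ℝ => -stdNormalPDF x) Filter.atTop (nhds 0) := by
    have := (tendsto_pow_mul_pdf 0).neg
    simp only [pow_zero, one_mul, neg_zero] at this
    exact this
  have h := integral_Ioi_of_hasDerivAt_of_tendsto' (a := a)
    (f := fun x => -stdNormalPDF x) (f' := fun y => y * stdNormalPDF y)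
    (fun x _ => hasDerivAt_negPdf x) integrable_id_mul_pdf.integrableOn htend
  rw [h]; ring

lemma integral_Ioi_sq_mul_pdf_sub (a : ℝ) :
    ∫ y in Set.Ioi a, (y ^ 2 * stdNormalPDF y - stdNormalPDF y) = a * stdNormalPDF a := by
  have hderiv : ∀ x : ℝ, HasDerivAt (fun x => -(x * stdNormalPDF x))
      (x ^ 2 * stdNormalPDF x - stdNormalPDF x) x := by
    intro x
    have := ((hasDerivAt_id x).mul (hasDerivAt_pdf x)).neg
    exact this.congr_deriv (by simp [id]; ring)
  have hint : Integrable (fun y : ℝ => y ^ 2 * stdNormalPDF y - stdNormalPDF y) :=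
    (integrable_pow_mul_pdf 2).sub integrable_pdf
  have htend : Filter.Tendsto (fun x : ℝ => -(x * stdNormalPDF x)) Filter.atTop (nhds 0) := by
    have := (tendsto_pow_mul_pdf 1).neg
    simp only [pow_one, neg_zero] at this
    exact this
  have h := integral_Ioi_of_hasDerivAt_of_tendsto' (a := a)
    (f := fun x => -(x * stdNormalPDF x))
    (f' := fun y => y ^ 2 * stdNormalPDF y - stdNormalPDF y)
    (fun x _ => hderiv x) hint.integrableOn htend
  rw [h]; ring
lemma integral_Ioi_sq_mul_pdf (a : ℝ) :
    ∫ y in Set.Ioi a, y ^ 2 * stdNormalPDF y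
      = a * stdNormalPDF a + ∫ y in Set.Ioi a, stdNormalPDF y := by
  have := integral_sub ((integrable_pow_mul_pdf 2).integrableOn
    (s := Set.Ioi a)) (integrable_pdf.integrableOn (s := Set.Ioi a))
  rw [integral_Ioi_sq_mul_pdf_sub] at this
  linarith [this]

/-- Cumulative distribution function of the standard normal distribution. -/
noncomputable def stdNormalCDF (x : ℝ) : ℝ :=
  ((gaussianReal 0 1) (Set.Iic x)).toReal

lemma std_eq_withDensity :
    gaussianReal 0 1 = volume.withDensity
      (fun x => ((Real.toNNReal (stdNormalPDF x) : ℝ≥0) : ℝ≥0∞)) := by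
  rw [gaussianReal_of_var_ne_zero 0 one_ne_zero]
  congr 1
  ext x
  rw [gaussianPDF, ENNReal.ofReal, stdNormalPDF_eq_gaussian]

lemma setIntegral_std (g : ℝ → ℝ) {s : Set ℝ} (hs : MeasurableSet s) :
    ∫ y in s, g y ∂(gaussianReal 0 1) = ∫ y in s, stdNormalPDF y * g y := by
  rw [std_eq_withDensity,
    setIntegral_withDensity_eq_setIntegral_smul (measurable_stdNormalPDF.real_toNNReal) g hs]
  refine setIntegral_congr_fun hs fun y _ => ?_
  simp [NNReal.smul_def, Real.coe_toNNReal _ (stdNormalPDF_nonneg y)]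

lemma std_apply_Ioi (a : ℝ) :
    ((gaussianReal 0 1) (Set.Ioi a)).toReal = ∫ y in Set.Ioi a, stdNormalPDF y := by
  rw [gaussianReal_apply_eq_integral 0 one_ne_zero, ← stdNormalPDF_eq_gaussian,
    ENNReal.toReal_ofReal (setIntegral_nonneg measurableSet_Ioi
      (fun y _ => stdNormalPDF_nonneg y))]

lemma one_sub_cdf (a : ℝ) :
    1 - stdNormalCDF a = ∫ y in Set.Ioi a, stdNormalPDF y := by
  have hc : (gaussianReal 0 1) (Set.Ioi a) = 1 - (gaussianReal 0 1) (Set.Iic a) := by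
    rw [← Set.compl_Iic, measure_compl measurableSet_Iic (measure_ne_top _ _),
      measure_univ]
  rw [← std_apply_Ioi, hc, ENNReal.toReal_sub_of_le prob_le_one ENNReal.one_ne_top,
    ENNReal.toReal_one, stdNormalCDF]

lemma integral_Ioi_pdf_pos (a : ℝ) : 0 < ∫ y in Set.Ioi a, stdNormalPDF y := by
  rw [setIntegral_pos_iff_support_of_nonneg_ae
    (Filter.Eventually.of_forall fun y => stdNormalPDF_nonneg y)
    integrable_pdf.integrableOn]
  have hsupp : Function.support stdNormalPDF = Set.univ :=
    Set.eq_univ_of_forall fun y => (stdNormalPDF_pos y).ne'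
  rw [hsupp, Set.univ_inter]
  simp

lemma map_affine_std {μ σ : ℝ} (hσ : 0 < σ) :
    Measure.map (fun y => σ * y + μ) (gaussianReal 0 1)
      = gaussianReal μ (Real.toNNReal (σ ^ 2)) := by
  have h1 : Measure.map (fun y : ℝ => σ * y) (gaussianReal 0 1)
      = gaussianReal 0 (⟨σ ^ 2, sq_nonneg σ⟩ * 1) := by
    convert gaussianReal_map_const_mul (μ := 0) (v := 1) σ using 2
    · exact (mul_zero σ).symm
    · rfl
  have h2 : (fun y : ℝ => σ * y + μ) = (fun y : ℝ => y + μ) ∘ (fun y : ℝ => σ * y) := rfl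
  rw [h2, ← Measure.map_map (by fun_prop) (by fun_prop), h1,
    gaussianReal_map_add_const μ]
  congr 1
  · ring
  · ext
    exact (mul_one (σ ^ 2 : ℝ)).trans (Real.coe_toNNReal _ (sq_nonneg σ)).symm

lemma preimage_affine_Ioi {μ σ : ℝ} (hσ : 0 < σ) (τ : ℝ) :
    (fun y : ℝ => σ * y + μ) ⁻¹' Set.Ioi τ = Set.Ioi ((τ - μ) / σ) := by
  ext y
  simp only [Set.mem_preimage, Set.mem_Ioi]
  rw [div_lt_iff₀ hσ]
  constructor <;> intro h <;> nlinarith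

lemma setIntegral_gauss {μ σ : ℝ} (hσ : 0 < σ) (τ : ℝ) (f : ℝ → ℝ) (hf : Measurable f) :
    ∫ x in Set.Ioi τ, f x ∂(gaussianReal μ (Real.toNNReal (σ ^ 2)))
      = ∫ y in Set.Ioi ((τ - μ) / σ), stdNormalPDF y * f (σ * y + μ) := by
  rw [← map_affine_std hσ, setIntegral_map measurableSet_Ioi
    (by exact hf.aestronglyMeasurable) (by fun_prop), preimage_affine_Ioi hσ,
    setIntegral_std _ measurableSet_Ioi]

lemma integrable_std (g : ℝ → ℝ) (hg : Measurable g)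
    (h : Integrable (fun y => stdNormalPDF y * g y)) :
    Integrable g (gaussianReal 0 1) := by
  rw [std_eq_withDensity, integrable_withDensity_iff (measurable_stdNormalPDF.real_toNNReal.coe_nnreal_ennreal)
    (Filter.Eventually.of_forall fun x => ENNReal.coe_lt_top)]
  refine h.congr (Filter.Eventually.of_forall fun y => ?_)
  simp [Real.coe_toNNReal _ (stdNormalPDF_nonneg y), mul_comm]

lemma integrable_sq_gauss {μ σ : ℝ} (hσ : 0 < σ) :
    Integrable (fun x => x ^ 2) (gaussianReal μ (Real.toNNReal (σ ^ 2))) := by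
  rw [← map_affine_std hσ, integrable_map_measure (by fun_prop) (by fun_prop)]
  refine integrable_std _ (by fun_prop) ?_
  have : Integrable (fun y => σ ^ 2 * (y ^ 2 * stdNormalPDF y)
      + (2 * σ * μ * (y * stdNormalPDF y) + μ ^ 2 * stdNormalPDF y)) :=
    ((integrable_pow_mul_pdf 2).const_mul _).add
      ((integrable_id_mul_pdf.const_mul _).add (integrable_pdf.const_mul _))
  refine this.congr (Filter.Eventually.of_forall fun y => ?_)
  simp only [Function.comp]
  ring

/-- Variance of a Gaussian `N(μ, σ²)` random variable conditional on it exceeding `τ`: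
`Var[X ∣ X > τ] = σ²·(1 + ξ·φ(ξ)/(1 - Φ(ξ)) - (φ(ξ)/(1 - Φ(ξ)))²)` with `ξ = (τ - μ)/σ`. -/
theorem truncated_gaussian_variance_above {Ω : Type*} [MeasureSpace Ω]
    [IsProbabilityMeasure (ℙ : Measure Ω)]
    (X : Ω → ℝ) (hX : Measurable X) (μ σ τ : ℝ) (hσ : 0 < σ)
    (hlaw : Measure.map X ℙ = gaussianReal μ (Real.toNNReal (σ ^ 2))) :
    variance X (ℙ[|{ω | τ < X ω}]) =
      σ ^ 2 * (1 + ((τ - μ) / σ) * stdNormalPDF ((τ - μ) / σ) / (1 - stdNormalCDF ((τ - μ) / σ))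
        - (stdNormalPDF ((τ - μ) / σ) / (1 - stdNormalCDF ((τ - μ) / σ))) ^ 2) := by
  set ξ := (τ - μ) / σ with hξ
  set Z := ∫ y in Set.Ioi ξ, stdNormalPDF y with hZdef
  set p := stdNormalPDF ξ with hp
  have hZpos : 0 < Z := integral_Ioi_pdf_pos ξ
  have hΦ : 1 - stdNormalCDF ξ = Z := one_sub_cdf ξ
  set A := {ω | τ < X ω} with hA
  have hAeq : A = X ⁻¹' Set.Ioi τ := rfl
  have hAm : MeasurableSet A := hX measurableSet_Ioi
  have key : ∀ f : ℝ → ℝ, Measurable f →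
      ∫ ω in A, f (X ω) ∂ℙ = ∫ y in Set.Ioi ξ, stdNormalPDF y * f (σ * y + μ) := by
    intro f hf
    have h := setIntegral_map (μ := ℙ) (g := X) (s := Set.Ioi τ) measurableSet_Ioi
      (f := f) hf.aestronglyMeasurable hX.aemeasurable
    rw [hlaw, setIntegral_gauss hσ τ f hf] at h
    rw [hAeq, ← h]
  have hPAtoReal : (ℙ A).toReal = Z := by
    have h1 : ∫ ω in A, (fun _ : ℝ => (1:ℝ)) (X ω) ∂ℙ = (ℙ A).toReal := by
      simp [measureReal_def]
    rw [← h1, key _ measurable_const, hZdef]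
    simp
  have hA0 : ℙ A ≠ 0 := by
    intro h
    rw [h] at hPAtoReal
    simp at hPAtoReal
    exact absurd hPAtoReal.symm hZpos.ne'
  haveI : IsProbabilityMeasure ℙ[|A] := cond_isProbabilityMeasure hA0
  have hcond : ∀ f : ℝ → ℝ, Measurable f →
      ∫ ω, f (X ω) ∂ℙ[|A] = Z⁻¹ * ∫ y in Set.Ioi ξ, stdNormalPDF y * f (σ * y + μ) := by
    intro f hf
    rw [← key f hf]
    simp only [ProbabilityTheory.cond, integral_smul_measure, ENNReal.toReal_inv,
      hPAtoReal, smul_eq_mul]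
  have m1 : ∫ ω, X ω ∂ℙ[|A] = Z⁻¹ * (σ * p + μ * Z) := by
    have h := hcond id measurable_id
    simp only [id] at h
    rw [h]
    congr 1
    have hsplit : ∀ y : ℝ, stdNormalPDF y * (σ * y + μ)
        = σ * (y * stdNormalPDF y) + μ * stdNormalPDF y := fun y => by ring
    simp_rw [hsplit]
    have i1 : Integrable (fun y : ℝ => σ * (y * stdNormalPDF y)) :=
      integrable_id_mul_pdf.const_mul σ
    have i2 : Integrable (fun y : ℝ => μ * stdNormalPDF y) := integrable_pdf.const_mul μ
    rw [integral_add i1.integrableOn i2.integrableOn, integral_const_mul, integral_const_mul,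
      integral_Ioi_mul_pdf]
  have m2 : ∫ ω, X ω ^ 2 ∂ℙ[|A] = Z⁻¹ * (σ ^ 2 * (ξ * p + Z) + 2 * σ * μ * p + μ ^ 2 * Z) := by
    have h := hcond (fun x => x ^ 2) (by fun_prop)
    rw [h]
    congr 1
    have hsplit : ∀ y : ℝ, stdNormalPDF y * (σ * y + μ) ^ 2
        = σ ^ 2 * (y ^ 2 * stdNormalPDF y) + (2 * σ * μ * (y * stdNormalPDF y)
          + μ ^ 2 * stdNormalPDF y) := fun y => by ring
    simp_rw [hsplit]
    have i1 : Integrable (fun y : ℝ => σ ^ 2 * (y ^ 2 * stdNormalPDF y)) :=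
      (integrable_pow_mul_pdf 2).const_mul _
    have i2 : Integrable (fun y : ℝ => 2 * σ * μ * (y * stdNormalPDF y)) :=
      integrable_id_mul_pdf.const_mul _
    have i3 : Integrable (fun y : ℝ => μ ^ 2 * stdNormalPDF y) := integrable_pdf.const_mul _
    have i23 : Integrable (fun y : ℝ => 2 * σ * μ * (y * stdNormalPDF y)
        + μ ^ 2 * stdNormalPDF y) := i2.add i3
    rw [integral_add i1.integrableOn i23.integrableOn,
      integral_add i2.integrableOn i3.integrableOn,
      integral_const_mul, integral_const_mul, integral_const_mul,
      integral_Ioi_sq_mul_pdf, integral_Ioi_mul_pdf, ← hZdef, ← hp]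
    ring
  have hmem : MemLp X 2 ℙ[|A] := by
    have hXp : MemLp X 2 ℙ := by
      rw [memLp_two_iff_integrable_sq hX.aestronglyMeasurable]
      have h2 : Integrable (fun x => x ^ 2) (Measure.map X ℙ) := by
        rw [hlaw]; exact integrable_sq_gauss hσ
      rw [integrable_map_measure (by fun_prop) hX.aemeasurable] at h2
      exact h2
    exact (hXp.restrict A).smul_measure (c := (ℙ A)⁻¹) (ENNReal.inv_ne_top.mpr hA0)
  rw [variance_eq_sub hmem]
  have hX2 : (ℙ[|A])[X ^ 2] = ∫ ω, X ω ^ 2 ∂ℙ[|A] := rfl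
  rw [hX2, m2, m1, hΦ]
  have hZne : Z ≠ 0 := hZpos.ne'
  clear_value ξ Z p
  field_simp
  ring
end
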